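/- arXiv:1512.08448 — 3 statements merged into one kernel-verified Lean document; each statement's English description precedes it below -/
import Mathlib

section
/- Let B be a bidirected graph containing an edge u_1u_k, let u_2,…,u_{k−1} (k ≥ 3) be distinct further vertices such that none of the pairs u_iu_{i+1} for 1 ≤ i ≤ k−1 is an edge of B, and let B' be the bigraph obtained from B by deleting the edge u_1u_k and adding the edges u_1u_2, u_2u_3, …, u_{k−1}u_k with local orientations forming a bidirected path whose local orientations at the endpoints u_1 and u_k agree with those of the deleted edge. Then B can be transformed into B' by a finite sequence of Λ- and Γ-operations. -/
/-- A bidirected graph (bigraph) on vertex set `Fin n`, encoded by its bidirection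
function: `bd u v` is the local orientation `τ(u, uv) ∈ {−1,+1}` of the edge `uv` at its
endpoint `u` if `uv` is an edge, and `0` if `u` and `v` are not joined by an edge. -/
structure Bigraph (n : ℕ) where
  bd : Fin n → Fin n → ℤ
  bd_mem : ∀ u v, bd u v = -1 ∨ bd u v = 0 ∨ bd u v = 1
  loopless : ∀ v, bd v v = 0
  adj_symm : ∀ u v, bd u v = 0 ↔ bd v u = 0

/-- The net-degree of a node `v`: the sum of the local orientations at `v` of all edges
incident to `v`. -/
def Bigraph.netDeg {n : ℕ} (B : Bigraph n) (v : Fin n) : ℤ := ∑ u, B.bd v u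

/-- A Γ-operation: at a node `v` with incident edges `vu` and `vw` (`u ≠ w`) whose local
orientations at `v` differ, swap these two local orientations; everything else is
unchanged. -/
def GammaStep {n : ℕ} (B B' : Bigraph n) : Prop :=
  ∃ u v w : Fin n, u ≠ w ∧
    B.bd v u ≠ 0 ∧ B.bd v w ≠ 0 ∧ B.bd v u ≠ B.bd v w ∧
    B'.bd v u = B.bd v w ∧ B'.bd v w = B.bd v u ∧
    ∀ a b : Fin n, ¬(a = v ∧ (b = u ∨ b = w)) → B'.bd a b = B.bd a b

/-- A Λ-operation (subdividing direction): replace an edge `uw` by edges `uv` and `vw`,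
where `v` is a node adjacent to neither `u` nor `w`; the local orientations at `u` and
`w` are kept and the two new local orientations at `v` are opposite. -/
def BLambdaSub {n : ℕ} (B B' : Bigraph n) : Prop :=
  ∃ u v w : Fin n, v ≠ u ∧ v ≠ w ∧
    B.bd u w ≠ 0 ∧ B.bd v u = 0 ∧ B.bd v w = 0 ∧
    B'.bd u w = 0 ∧
    B'.bd u v = B.bd u w ∧ B'.bd w v = B.bd w u ∧
    B'.bd v u ≠ 0 ∧ B'.bd v u = - B'.bd v w ∧
    ∀ a b : Fin n, s(a, b) ≠ s(u, w) → s(a, b) ≠ s(u, v) → s(a, b) ≠ s(v, w) →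
      B'.bd a b = B.bd a b

/-- A Δ-operation (adding direction): on three pairwise distinct, pairwise non-adjacent
vertices `u₁, u₂, u₃`, add the three edges `u₁u₂, u₂u₃, u₁u₃`, each with opposite local
orientations at its two endpoints (a bidirected triangle). -/
def BDeltaAdd {n : ℕ} (B B' : Bigraph n) : Prop :=
  ∃ u₁ u₂ u₃ : Fin n, u₁ ≠ u₂ ∧ u₂ ≠ u₃ ∧ u₁ ≠ u₃ ∧
    B.bd u₁ u₂ = 0 ∧ B.bd u₂ u₃ = 0 ∧ B.bd u₁ u₃ = 0 ∧
    B'.bd u₁ u₂ ≠ 0 ∧ B'.bd u₂ u₃ ≠ 0 ∧ B'.bd u₁ u₃ ≠ 0 ∧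
    B'.bd u₁ u₂ = - B'.bd u₂ u₁ ∧ B'.bd u₂ u₃ = - B'.bd u₃ u₂ ∧ B'.bd u₁ u₃ = - B'.bd u₃ u₁ ∧
    ∀ a b : Fin n, s(a, b) ≠ s(u₁, u₂) → s(a, b) ≠ s(u₂, u₃) → s(a, b) ≠ s(u₁, u₃) →
      B'.bd a b = B.bd a b

private lemma Bigraph.ext' {n : ℕ} {B C : Bigraph n} (h : ∀ a b, B.bd a b = C.bd a b) : B = C := by
  cases B; cases C
  simp only [Bigraph.mk.injEq]
  funext a b
  exact h a b

private lemma sign_eq_neg {x y : ℤ} (hx : x = -1 ∨ x = 0 ∨ x = 1) (hy : y = -1 ∨ y = 0 ∨ y = 1)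
    (hx0 : x ≠ 0) (hy0 : y ≠ 0) (hne : x ≠ y) : y = -x := by
  rcases hx with h|h|h <;> rcases hy with h'|h'|h' <;> omega

private lemma gamma_or_eq {n : ℕ} (X Y : Bigraph n) (u v w : Fin n) (huw : u ≠ w)
    (h1 : X.bd v u ≠ 0) (h2 : X.bd v w ≠ 0)
    (hYu : Y.bd v u = X.bd v w) (hYw : Y.bd v w = X.bd v u)
    (hr : ∀ a b, ¬(a = v ∧ (b = u ∨ b = w)) → Y.bd a b = X.bd a b) :
    Relation.ReflTransGen (fun X Y => BLambdaSub X Y ∨ BLambdaSub Y X ∨ GammaStep X Y) X Y := by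
  by_cases he : X.bd v u = X.bd v w
  · have hXY : X = Y := by
      refine Bigraph.ext' (fun a b => ?_)
      by_cases hc : a = v ∧ (b = u ∨ b = w)
      · obtain ⟨rfl, hb⟩ := hc
        rcases hb with rfl | rfl
        · rw [hYu, he]
        · rw [hYw, he]
      · exact (hr a b hc).symm
    exact hXY ▸ Relation.ReflTransGen.refl
  · exact Relation.ReflTransGen.single (Or.inr (Or.inr ⟨u, v, w, huw, h1, h2, he, hYu, hYw, hr⟩))

private lemma path_aux {n : ℕ} : ∀ k : ℕ, 3 ≤ k → ∀ (B B' : Bigraph n) (p : ℕ → Fin n),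
    (∀ i < k, ∀ j < k, p i = p j → i = j) →
    (B.bd (p 0) (p (k - 1)) ≠ 0) →
    (∀ i, i + 1 < k → B.bd (p i) (p (i + 1)) = 0) →
    (B'.bd (p 0) (p (k - 1)) = 0) →
    (B'.bd (p 0) (p 1) = B.bd (p 0) (p (k - 1))) →
    (B'.bd (p (k - 1)) (p (k - 2)) = B.bd (p (k - 1)) (p 0)) →
    (∀ i, i + 1 < k → B'.bd (p i) (p (i + 1)) ≠ 0) →
    (∀ i, 0 < i → i + 1 < k → B'.bd (p i) (p (i - 1)) ≠ B'.bd (p i) (p (i + 1))) →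
    (∀ a b : Fin n, s(a, b) ≠ s(p 0, p (k - 1)) →
      (∀ i, i + 1 < k → s(a, b) ≠ s(p i, p (i + 1))) → B'.bd a b = B.bd a b) →
    Relation.ReflTransGen (fun X Y => BLambdaSub X Y ∨ BLambdaSub Y X ∨ GammaStep X Y) B B' := by
  intro k
  induction k using Nat.strong_induction_on with
  | _ k IH =>
  intro hk B B' p hp hedge hnonedge hdel hend0 hend1 hedges hpath hrest
  by_cases hk4 : k < 4
  · -- base case k = 3 : a single Λ-operation
    have hk3 : k = 3 := by omega
    subst hk3
    refine Relation.ReflTransGen.single (Or.inl ⟨p 0, p 1, p 2, ?_, ?_, ?_, ?_, ?_, ?_, ?_, ?_, ?_, ?_, ?_⟩)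
    · exact fun h => by simpa using hp 1 (by omega) 0 (by omega) h
    · exact fun h => by simpa using hp 1 (by omega) 2 (by omega) h
    · exact hedge
    · exact (B.adj_symm _ _).mp (hnonedge 0 (by omega))
    · exact hnonedge 1 (by omega)
    · exact hdel
    · exact hend0
    · exact hend1
    · exact fun h => hedges 0 (by omega) ((B'.adj_symm _ _).mpr h)
    · exact sign_eq_neg (B'.bd_mem _ _) (B'.bd_mem _ _) (hedges 1 (by omega))
        (fun h => hedges 0 (by omega) ((B'.adj_symm _ _).mpr h)) (hpath 1 (by omega) (by omega)).symm
    · intro a b h1 h2 h3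
      refine hrest a b h1 (fun i hi => ?_)
      have : i = 0 ∨ i = 1 := by omega
      rcases this with rfl | rfl
      · exact h2
      · exact h3
  · obtain ⟨m, rfl⟩ : ∃ m, k = m + 4 := ⟨k - 4, by omega⟩
    clear hk hk4
    -- step case: k = m + 4
    simp only [show m + 4 - 1 = m + 3 from rfl, show m + 4 - 2 = m + 2 from rfl]
      at hedge hdel hend0 hend1 hrest
    have hpne : ∀ i j : ℕ, i < m + 4 → j < m + 4 → i ≠ j → p i ≠ p j :=
      fun i j hi hj hij h => hij (hp i hi j hj h)
    have hsne : ∀ i j i' j' : ℕ, i < m + 4 → j < m + 4 → i' < m + 4 → j' < m + 4 →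
        ¬(i = i' ∧ j = j') → ¬(i = j' ∧ j = i') → s(p i, p j) ≠ s(p i', p j') := by
      intro i j i' j' hi hj hi' hj' h1 h2 h
      rw [Sym2.eq_iff] at h
      rcases h with ⟨ha, hb⟩ | ⟨ha, hb⟩
      · exact h1 ⟨hp _ hi _ hi' ha, hp _ hj _ hj' hb⟩
      · exact h2 ⟨hp _ hi _ hj' ha, hp _ hj _ hi' hb⟩
    have hdiag : ∀ (v : Fin n) (i j : ℕ), i < m + 4 → j < m + 4 → i ≠ j → s(v, v) ≠ s(p i, p j) := by
      intro v i j hi hj hij h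
      rw [Sym2.eq_iff] at h
      rcases h with ⟨h1, h2⟩ | ⟨h1, h2⟩
      · exact hpne i j hi hj hij (h1.symm.trans h2)
      · exact hpne i j hi hj hij (h2.symm.trans h1)
    have ne01 : p 0 ≠ p 1 := hpne 0 1 (by omega) (by omega) (by omega)
    have ne02 : p 0 ≠ p 2 := hpne 0 2 (by omega) (by omega) (by omega)
    have ne0z : p 0 ≠ p (m + 2) := hpne 0 (m + 2) (by omega) (by omega) (by omega)
    have ne0y : p 0 ≠ p (m + 3) := hpne 0 (m + 3) (by omega) (by omega) (by omega)
    have ne12 : p 1 ≠ p 2 := hpne 1 2 (by omega) (by omega) (by omega)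
    have ne1z : p 1 ≠ p (m + 2) := hpne 1 (m + 2) (by omega) (by omega) (by omega)
    have ne1y : p 1 ≠ p (m + 3) := hpne 1 (m + 3) (by omega) (by omega) (by omega)
    have ne2y : p 2 ≠ p (m + 3) := hpne 2 (m + 3) (by omega) (by omega) (by omega)
    have nezy : p (m + 2) ≠ p (m + 3) := hpne (m + 2) (m + 3) (by omega) (by omega) (by omega)
    have hyx0 : B.bd (p (m + 3)) (p 0) ≠ 0 := fun h => hedge ((B.adj_symm _ _).mpr h)
    have ha0 : B'.bd (p 1) (p 0) ≠ 0 := fun h => hedges 0 (by omega) ((B'.adj_symm _ _).mpr h)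
    have h12 : B'.bd (p 1) (p 2) ≠ 0 := hedges 1 (by omega)
    have h21 : B'.bd (p 2) (p 1) ≠ 0 := fun h => h12 ((B'.adj_symm _ _).mpr h)
    have hzy : B'.bd (p (m + 2)) (p (m + 3)) ≠ 0 := hedges (m + 2) (by omega)
    have hyz : B'.bd (p (m + 3)) (p (m + 2)) ≠ 0 := fun h => hzy ((B'.adj_symm _ _).mpr h)
    have h12neg : B'.bd (p 1) (p 2) = -(B'.bd (p 1) (p 0)) :=
      sign_eq_neg (B'.bd_mem _ _) (B'.bd_mem _ _) ha0 h12 (hpath 1 (by omega) (by omega))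
    have hch : B'.bd (p 1) (p (m + 3)) = B.bd (p 1) (p (m + 3)) :=
      hrest _ _ (hsne 1 (m + 3) 0 (m + 3) (by omega) (by omega) (by omega) (by omega)
          (by omega) (by omega))
        (fun i hi => hsne 1 (m + 3) i (i + 1) (by omega) (by omega) (by omega) (by omega)
          (by omega) (by omega))
    have hch' : B'.bd (p (m + 3)) (p 1) = B.bd (p (m + 3)) (p 1) :=
      hrest _ _ (hsne (m + 3) 1 0 (m + 3) (by omega) (by omega) (by omega) (by omega)
          (by omega) (by omega))
        (fun i hi => hsne (m + 3) 1 i (i + 1) (by omega) (by omega) (by omega) (by omega)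
          (by omega) (by omega))
    by_cases hA : B.bd (p 1) (p (m + 3)) = 0
    · -- Case A: p 1 not adjacent to p (m+3) in B.
      -- Subdivide the edge p0–p(m+3) at p1, then use the IH on the path p1,…,p(m+3).
      obtain ⟨B₁, hB₁⟩ : ∃ B₁ : Bigraph n, B₁.bd = (fun a b =>
          if s(a, b) = s(p 0, p (m + 3)) then 0
          else if s(a, b) = s(p 0, p 1) then
            (if a = p 0 then B.bd (p 0) (p (m + 3)) else B'.bd (p 1) (p 0))
          else if s(a, b) = s(p 1, p (m + 3)) then
            (if a = p 1 then -(B'.bd (p 1) (p 0)) else B.bd (p (m + 3)) (p 0))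
          else B.bd a b) := by
        have hv1 : ∀ c : Fin n,
            (if c = p 0 then B.bd (p 0) (p (m + 3)) else B'.bd (p 1) (p 0)) ≠ 0 := by
          intro c; split_ifs; exacts [hedge, ha0]
        have hv2 : ∀ c : Fin n,
            (if c = p 1 then -(B'.bd (p 1) (p 0)) else B.bd (p (m + 3)) (p 0)) ≠ 0 := by
          intro c; split_ifs
          · exact neg_ne_zero.mpr ha0
          · exact hyx0
        refine ⟨⟨(fun a b =>
          if s(a, b) = s(p 0, p (m + 3)) then 0
          else if s(a, b) = s(p 0, p 1) then
            (if a = p 0 then B.bd (p 0) (p (m + 3)) else B'.bd (p 1) (p 0))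
          else if s(a, b) = s(p 1, p (m + 3)) then
            (if a = p 1 then -(B'.bd (p 1) (p 0)) else B.bd (p (m + 3)) (p 0))
          else B.bd a b), ?_, ?_, ?_⟩, rfl⟩
        · intro a b
          by_cases h1 : s(a, b) = s(p 0, p (m + 3))
          · rw [if_pos h1]; exact Or.inr (Or.inl rfl)
          rw [if_neg h1]
          by_cases h2 : s(a, b) = s(p 0, p 1)
          · rw [if_pos h2]
            by_cases h : a = p 0
            · rw [if_pos h]; exact B.bd_mem _ _
            · rw [if_neg h]; exact B'.bd_mem _ _
          rw [if_neg h2]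
          by_cases h3 : s(a, b) = s(p 1, p (m + 3))
          · rw [if_pos h3]
            by_cases h : a = p 1
            · rw [if_pos h]
              rcases B'.bd_mem (p 1) (p 0) with h'|h'|h' <;> omega
            · rw [if_neg h]; exact B.bd_mem _ _
          rw [if_neg h3]
          exact B.bd_mem _ _
        · intro v
          rw [if_neg (hdiag v 0 (m + 3) (by omega) (by omega) (by omega)),
            if_neg (hdiag v 0 1 (by omega) (by omega) (by omega)),
            if_neg (hdiag v 1 (m + 3) (by omega) (by omega) (by omega))]
          exact B.loopless v
        · intro a b
          by_cases h1 : s(a, b) = s(p 0, p (m + 3))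
          · rw [if_pos h1, if_pos (Sym2.eq_swap.trans h1)]
          rw [if_neg h1, if_neg (fun hc => h1 (Sym2.eq_swap.trans hc))]
          by_cases h2 : s(a, b) = s(p 0, p 1)
          · rw [if_pos h2, if_pos (Sym2.eq_swap.trans h2)]
            exact iff_of_false (hv1 a) (hv1 b)
          rw [if_neg h2, if_neg (fun hc => h2 (Sym2.eq_swap.trans hc))]
          by_cases h3 : s(a, b) = s(p 1, p (m + 3))
          · rw [if_pos h3, if_pos (Sym2.eq_swap.trans h3)]
            exact iff_of_false (hv2 a) (hv2 b)
          rw [if_neg h3, if_neg (fun hc => h3 (Sym2.eq_swap.trans hc))]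
          exact B.adj_symm a b
      have E1 : B₁.bd (p 0) (p (m + 3)) = 0 := by rw [hB₁]; dsimp only; rw [if_pos rfl]
      have E2 : B₁.bd (p 0) (p 1) = B.bd (p 0) (p (m + 3)) := by
        rw [hB₁]; dsimp only
        rw [if_neg (hsne 0 1 0 (m + 3) (by omega) (by omega) (by omega) (by omega)
          (by omega) (by omega)), if_pos rfl, if_pos rfl]
      have E3 : B₁.bd (p 1) (p 0) = B'.bd (p 1) (p 0) := by
        rw [hB₁]; dsimp only
        rw [if_neg (hsne 1 0 0 (m + 3) (by omega) (by omega) (by omega) (by omega)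
          (by omega) (by omega)),
          if_pos (by rw [Sym2.eq_iff]; right; exact ⟨rfl, rfl⟩), if_neg ne01.symm]
      have E4 : B₁.bd (p 1) (p (m + 3)) = -(B'.bd (p 1) (p 0)) := by
        rw [hB₁]; dsimp only
        rw [if_neg (hsne 1 (m + 3) 0 (m + 3) (by omega) (by omega) (by omega) (by omega)
          (by omega) (by omega)),
          if_neg (hsne 1 (m + 3) 0 1 (by omega) (by omega) (by omega) (by omega)
          (by omega) (by omega)), if_pos rfl, if_pos rfl]
      have E5 : B₁.bd (p (m + 3)) (p 1) = B.bd (p (m + 3)) (p 0) := by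
        rw [hB₁]; dsimp only
        rw [if_neg (hsne (m + 3) 1 0 (m + 3) (by omega) (by omega) (by omega) (by omega)
          (by omega) (by omega)),
          if_neg (hsne (m + 3) 1 0 1 (by omega) (by omega) (by omega) (by omega)
          (by omega) (by omega)),
          if_pos (by rw [Sym2.eq_iff]; right; exact ⟨rfl, rfl⟩), if_neg ne1y.symm]
      have Edef : ∀ a b : Fin n, s(a, b) ≠ s(p 0, p (m + 3)) → s(a, b) ≠ s(p 0, p 1) →
          s(a, b) ≠ s(p 1, p (m + 3)) → B₁.bd a b = B.bd a b := by
        intro a b h1 h2 h3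
        rw [hB₁]; dsimp only
        rw [if_neg h1, if_neg h2, if_neg h3]
      refine Relation.ReflTransGen.head (Or.inl ⟨p 0, p 1, p (m + 3), ne01.symm, ne1y, hedge,
        (B.adj_symm _ _).mp (hnonedge 0 (by omega)), hA, E1, E2, E5,
        by rw [E3]; exact ha0, by rw [E3, E4]; ring, Edef⟩) ?_
      refine IH (m + 3) (by omega) (by omega) B₁ B' (fun i => p (i + 1)) ?_ ?_ ?_ ?_ ?_ ?_ ?_ ?_ ?_
      · intro i hi j hj h
        have := hp (i + 1) (by omega) (j + 1) (by omega) h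
        omega
      · show B₁.bd (p 1) (p (m + 3)) ≠ 0
        rw [E4]; exact neg_ne_zero.mpr ha0
      · intro i hi
        show B₁.bd (p (i + 1)) (p (i + 1 + 1)) = 0
        rw [Edef _ _ (hsne (i + 1) (i + 1 + 1) 0 (m + 3) (by omega) (by omega) (by omega)
            (by omega) (by omega) (by omega))
          (hsne (i + 1) (i + 1 + 1) 0 1 (by omega) (by omega) (by omega)
            (by omega) (by omega) (by omega))
          (hsne (i + 1) (i + 1 + 1) 1 (m + 3) (by omega) (by omega) (by omega)
            (by omega) (by omega) (by omega))]
        exact hnonedge (i + 1) (by omega)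
      · show B'.bd (p 1) (p (m + 3)) = 0
        rw [hch]; exact hA
      · show B'.bd (p 1) (p 2) = B₁.bd (p 1) (p (m + 3))
        rw [E4]; exact h12neg
      · show B'.bd (p (m + 3)) (p (m + 2)) = B₁.bd (p (m + 3)) (p 1)
        rw [E5]; exact hend1
      · intro i hi
        exact hedges (i + 1) (by omega)
      · intro i h0 hi
        show B'.bd (p (i + 1)) (p (i - 1 + 1)) ≠ B'.bd (p (i + 1)) (p (i + 1 + 1))
        rw [show i - 1 + 1 = i from by omega]
        exact hpath (i + 1) (by omega) (by omega)
      · intro a b hab1 hab2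
        show B'.bd a b = B₁.bd a b
        by_cases hc1 : s(a, b) = s(p 0, p (m + 3))
        · rcases Sym2.eq_iff.mp hc1 with ⟨rfl, rfl⟩ | ⟨rfl, rfl⟩
          · rw [E1]; exact hdel
          · rw [(B₁.adj_symm _ _).mpr E1]; exact (B'.adj_symm _ _).mpr hdel
        by_cases hc2 : s(a, b) = s(p 0, p 1)
        · rcases Sym2.eq_iff.mp hc2 with ⟨rfl, rfl⟩ | ⟨rfl, rfl⟩
          · rw [E2]; exact hend0
          · rw [E3]
        rw [Edef a b hc1 hc2 hab1]
        refine hrest a b hc1 (fun i hi => ?_)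
        cases i with
        | zero => exact hc2
        | succ j => exact hab2 j (by omega)
    · -- Case B: p 1 is adjacent to p (m+3) in B (chord).
      -- First replace the chord p1–p(m+3) by the path p1,…,p(m+3) via the IH,
      -- then Λ-subdivide the edge p0–p(m+3) at p1, then fix signs by two Γ-operations.
      have hd : B.bd (p (m + 3)) (p 1) ≠ 0 := fun h => hA ((B.adj_symm _ _).mpr h)
      have hcht : B'.bd (p 1) (p (m + 3)) ≠ 0 := by rw [hch]; exact hA
      have hcht' : B'.bd (p (m + 3)) (p 1) ≠ 0 := by rw [hch']; exact hd
      obtain ⟨B₁, hB₁⟩ : ∃ B₁ : Bigraph n, B₁.bd = (fun a b =>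
          if s(a, b) = s(p 1, p (m + 3)) then 0
          else if s(a, b) = s(p 0, p 1) then 0
          else if s(a, b) = s(p 0, p (m + 3)) then B.bd a b
          else if s(a, b) = s(p 1, p 2) then
            (if a = p 1 then B.bd (p 1) (p (m + 3)) else B'.bd a b)
          else if s(a, b) = s(p (m + 3), p (m + 2)) then
            (if a = p (m + 3) then B.bd (p (m + 3)) (p 1) else B'.bd a b)
          else B'.bd a b) := by
        have hv4 : ∀ a b : Fin n, s(a, b) = s(p 1, p 2) →
            (if a = p 1 then B.bd (p 1) (p (m + 3)) else B'.bd a b) ≠ 0 := by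
          intro a b hs
          by_cases h : a = p 1
          · rw [if_pos h]; exact hA
          · rw [if_neg h]
            rcases Sym2.eq_iff.mp hs with ⟨ha', hb'⟩ | ⟨ha', hb'⟩
            · exact absurd ha' h
            · rw [ha', hb']; exact h21
        have hv5 : ∀ a b : Fin n, s(a, b) = s(p (m + 3), p (m + 2)) →
            (if a = p (m + 3) then B.bd (p (m + 3)) (p 1) else B'.bd a b) ≠ 0 := by
          intro a b hs
          by_cases h : a = p (m + 3)
          · rw [if_pos h]; exact hd
          · rw [if_neg h]
            rcases Sym2.eq_iff.mp hs with ⟨ha', hb'⟩ | ⟨ha', hb'⟩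
            · exact absurd ha' h
            · rw [ha', hb']; exact hzy
        refine ⟨⟨(fun a b =>
          if s(a, b) = s(p 1, p (m + 3)) then 0
          else if s(a, b) = s(p 0, p 1) then 0
          else if s(a, b) = s(p 0, p (m + 3)) then B.bd a b
          else if s(a, b) = s(p 1, p 2) then
            (if a = p 1 then B.bd (p 1) (p (m + 3)) else B'.bd a b)
          else if s(a, b) = s(p (m + 3), p (m + 2)) then
            (if a = p (m + 3) then B.bd (p (m + 3)) (p 1) else B'.bd a b)
          else B'.bd a b), ?_, ?_, ?_⟩, rfl⟩
        · intro a b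
          by_cases h1 : s(a, b) = s(p 1, p (m + 3))
          · rw [if_pos h1]; exact Or.inr (Or.inl rfl)
          rw [if_neg h1]
          by_cases h2 : s(a, b) = s(p 0, p 1)
          · rw [if_pos h2]; exact Or.inr (Or.inl rfl)
          rw [if_neg h2]
          by_cases h3 : s(a, b) = s(p 0, p (m + 3))
          · rw [if_pos h3]; exact B.bd_mem _ _
          rw [if_neg h3]
          by_cases h4 : s(a, b) = s(p 1, p 2)
          · rw [if_pos h4]
            by_cases h : a = p 1
            · rw [if_pos h]; exact B.bd_mem _ _
            · rw [if_neg h]; exact B'.bd_mem _ _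
          rw [if_neg h4]
          by_cases h5 : s(a, b) = s(p (m + 3), p (m + 2))
          · rw [if_pos h5]
            by_cases h : a = p (m + 3)
            · rw [if_pos h]; exact B.bd_mem _ _
            · rw [if_neg h]; exact B'.bd_mem _ _
          rw [if_neg h5]
          exact B'.bd_mem _ _
        · intro v
          rw [if_neg (hdiag v 1 (m + 3) (by omega) (by omega) (by omega)),
            if_neg (hdiag v 0 1 (by omega) (by omega) (by omega)),
            if_neg (hdiag v 0 (m + 3) (by omega) (by omega) (by omega)),
            if_neg (hdiag v 1 2 (by omega) (by omega) (by omega)),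
            if_neg (hdiag v (m + 3) (m + 2) (by omega) (by omega) (by omega))]
          exact B'.loopless v
        · intro a b
          by_cases h1 : s(a, b) = s(p 1, p (m + 3))
          · rw [if_pos h1, if_pos (Sym2.eq_swap.trans h1)]
          rw [if_neg h1, if_neg (fun hc => h1 (Sym2.eq_swap.trans hc))]
          by_cases h2 : s(a, b) = s(p 0, p 1)
          · rw [if_pos h2, if_pos (Sym2.eq_swap.trans h2)]
          rw [if_neg h2, if_neg (fun hc => h2 (Sym2.eq_swap.trans hc))]
          by_cases h3 : s(a, b) = s(p 0, p (m + 3))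
          · rw [if_pos h3, if_pos (Sym2.eq_swap.trans h3)]
            exact B.adj_symm a b
          rw [if_neg h3, if_neg (fun hc => h3 (Sym2.eq_swap.trans hc))]
          by_cases h4 : s(a, b) = s(p 1, p 2)
          · rw [if_pos h4, if_pos (Sym2.eq_swap.trans h4)]
            exact iff_of_false (hv4 a b h4) (hv4 b a (Sym2.eq_swap.trans h4))
          rw [if_neg h4, if_neg (fun hc => h4 (Sym2.eq_swap.trans hc))]
          by_cases h5 : s(a, b) = s(p (m + 3), p (m + 2))
          · rw [if_pos h5, if_pos (Sym2.eq_swap.trans h5)]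
            exact iff_of_false (hv5 a b h5) (hv5 b a (Sym2.eq_swap.trans h5))
          rw [if_neg h5, if_neg (fun hc => h5 (Sym2.eq_swap.trans hc))]
          exact B'.adj_symm a b
      have E1 : B₁.bd (p 1) (p (m + 3)) = 0 := by rw [hB₁]; dsimp only; rw [if_pos rfl]
      have E2 : B₁.bd (p 1) (p 0) = 0 := by
        rw [hB₁]; dsimp only
        rw [if_neg (hsne 1 0 1 (m + 3) (by omega) (by omega) (by omega) (by omega) (by omega) (by omega)),
          if_pos (by rw [Sym2.eq_iff]; right; exact ⟨rfl, rfl⟩)]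
      have E0y : ∀ a b : Fin n, s(a, b) = s(p 0, p (m + 3)) → B₁.bd a b = B.bd a b := by
        intro a b hs
        rw [hB₁]; dsimp only
        rw [if_neg (fun h => (hsne 0 (m + 3) 1 (m + 3) (by omega) (by omega) (by omega) (by omega) (by omega) (by omega)) (hs.symm.trans h)),
          if_neg (fun h => (hsne 0 (m + 3) 0 1 (by omega) (by omega) (by omega) (by omega) (by omega) (by omega)) (hs.symm.trans h)), if_pos hs]
      have E3 : B₁.bd (p 0) (p (m + 3)) = B.bd (p 0) (p (m + 3)) := E0y _ _ rfl
      have E3' : B₁.bd (p (m + 3)) (p 0) = B.bd (p (m + 3)) (p 0) :=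
        E0y _ _ (by rw [Sym2.eq_iff]; right; exact ⟨rfl, rfl⟩)
      have E4 : B₁.bd (p 1) (p 2) = B.bd (p 1) (p (m + 3)) := by
        rw [hB₁]; dsimp only
        rw [if_neg (hsne 1 2 1 (m + 3) (by omega) (by omega) (by omega) (by omega) (by omega) (by omega)),
          if_neg (hsne 1 2 0 1 (by omega) (by omega) (by omega) (by omega) (by omega) (by omega)),
          if_neg (hsne 1 2 0 (m + 3) (by omega) (by omega) (by omega) (by omega) (by omega) (by omega)), if_pos rfl, if_pos rfl]
      have E5 : B₁.bd (p (m + 3)) (p (m + 2)) = B.bd (p (m + 3)) (p 1) := by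
        rw [hB₁]; dsimp only
        rw [if_neg (hsne (m + 3) (m + 2) 1 (m + 3) (by omega) (by omega) (by omega) (by omega) (by omega) (by omega)),
          if_neg (hsne (m + 3) (m + 2) 0 1 (by omega) (by omega) (by omega) (by omega) (by omega) (by omega)),
          if_neg (hsne (m + 3) (m + 2) 0 (m + 3) (by omega) (by omega) (by omega) (by omega) (by omega) (by omega)),
          if_neg (hsne (m + 3) (m + 2) 1 2 (by omega) (by omega) (by omega) (by omega) (by omega) (by omega)), if_pos rfl, if_pos rfl]
      have Edef1 : ∀ a b : Fin n, s(a, b) ≠ s(p 1, p (m + 3)) → s(a, b) ≠ s(p 0, p 1) →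
          s(a, b) ≠ s(p 0, p (m + 3)) → ¬(a = p 1 ∧ b = p 2) →
          ¬(a = p (m + 3) ∧ b = p (m + 2)) → B₁.bd a b = B'.bd a b := by
        intro a b h1 h2 h3 h4 h5
        rw [hB₁]; dsimp only
        rw [if_neg h1, if_neg h2, if_neg h3]
        by_cases hc : s(a, b) = s(p 1, p 2)
        · have hb : a = p 1 → b = p 2 := by
            intro h
            rcases Sym2.eq_iff.mp hc with ⟨_, hb'⟩ | ⟨ha', _⟩
            · exact hb'
            · exact absurd (h.symm.trans ha') ne12
          rw [if_pos hc, if_neg (fun h => h4 ⟨h, hb h⟩)]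
        rw [if_neg hc]
        by_cases hc5 : s(a, b) = s(p (m + 3), p (m + 2))
        · have hb : a = p (m + 3) → b = p (m + 2) := by
            intro h
            rcases Sym2.eq_iff.mp hc5 with ⟨_, hb'⟩ | ⟨ha', _⟩
            · exact hb'
            · exact absurd (h.symm.trans ha') nezy.symm
          rw [if_pos hc5, if_neg (fun h => h5 ⟨h, hb h⟩)]
        rw [if_neg hc5]
      obtain ⟨B₂, hB₂⟩ : ∃ B₂ : Bigraph n, B₂.bd = (fun a b =>
          if a = p 1 ∧ b = p 2 then B.bd (p 1) (p (m + 3))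
          else if a = p 1 ∧ b = p (m + 3) then -(B'.bd (p 1) (p 0))
          else if a = p (m + 3) ∧ b = p 1 then B.bd (p (m + 3)) (p 0)
          else if a = p (m + 3) ∧ b = p (m + 2) then B.bd (p (m + 3)) (p 1)
          else B'.bd a b) := by
        have hsup : ∀ a b : Fin n, (fun a b =>
          if a = p 1 ∧ b = p 2 then B.bd (p 1) (p (m + 3))
          else if a = p 1 ∧ b = p (m + 3) then -(B'.bd (p 1) (p 0))
          else if a = p (m + 3) ∧ b = p 1 then B.bd (p (m + 3)) (p 0)
          else if a = p (m + 3) ∧ b = p (m + 2) then B.bd (p (m + 3)) (p 1)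
          else B'.bd a b) a b = 0 ↔ B'.bd a b = 0 := by
          intro a b; dsimp only
          by_cases h1 : a = p 1 ∧ b = p 2
          · rw [if_pos h1]
            exact iff_of_false hA (by rw [h1.1, h1.2]; exact h12)
          rw [if_neg h1]
          by_cases h2 : a = p 1 ∧ b = p (m + 3)
          · rw [if_pos h2]
            exact iff_of_false (neg_ne_zero.mpr ha0) (by rw [h2.1, h2.2]; exact hcht)
          rw [if_neg h2]
          by_cases h3 : a = p (m + 3) ∧ b = p 1
          · rw [if_pos h3]
            exact iff_of_false hyx0 (by rw [h3.1, h3.2]; exact hcht')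
          rw [if_neg h3]
          by_cases h4 : a = p (m + 3) ∧ b = p (m + 2)
          · rw [if_pos h4]
            exact iff_of_false hd (by rw [h4.1, h4.2]; exact hyz)
          rw [if_neg h4]
        refine ⟨⟨(fun a b =>
          if a = p 1 ∧ b = p 2 then B.bd (p 1) (p (m + 3))
          else if a = p 1 ∧ b = p (m + 3) then -(B'.bd (p 1) (p 0))
          else if a = p (m + 3) ∧ b = p 1 then B.bd (p (m + 3)) (p 0)
          else if a = p (m + 3) ∧ b = p (m + 2) then B.bd (p (m + 3)) (p 1)
          else B'.bd a b), ?_, ?_, fun a b => (hsup a b).trans ((B'.adj_symm a b).trans (hsup b a).symm)⟩, rfl⟩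
        · intro a b
          by_cases h1 : a = p 1 ∧ b = p 2
          · rw [if_pos h1]; exact B.bd_mem _ _
          rw [if_neg h1]
          by_cases h2 : a = p 1 ∧ b = p (m + 3)
          · rw [if_pos h2]
            rcases B'.bd_mem (p 1) (p 0) with h'|h'|h' <;> omega
          rw [if_neg h2]
          by_cases h3 : a = p (m + 3) ∧ b = p 1
          · rw [if_pos h3]; exact B.bd_mem _ _
          rw [if_neg h3]
          by_cases h4 : a = p (m + 3) ∧ b = p (m + 2)
          · rw [if_pos h4]; exact B.bd_mem _ _
          rw [if_neg h4]
          exact B'.bd_mem _ _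
        · intro v
          rw [if_neg (fun h : v = p 1 ∧ v = p 2 => ne12 (h.1.symm.trans h.2)),
            if_neg (fun h : v = p 1 ∧ v = p (m + 3) => ne1y (h.1.symm.trans h.2)),
            if_neg (fun h : v = p (m + 3) ∧ v = p 1 => ne1y (h.2.symm.trans h.1)),
            if_neg (fun h : v = p (m + 3) ∧ v = p (m + 2) => nezy (h.2.symm.trans h.1))]
          exact B'.loopless v
      have G1 : B₂.bd (p 1) (p 2) = B.bd (p 1) (p (m + 3)) := by
        rw [hB₂]; dsimp only; rw [if_pos ⟨rfl, rfl⟩]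
      have G2 : B₂.bd (p 1) (p (m + 3)) = -(B'.bd (p 1) (p 0)) := by
        rw [hB₂]; dsimp only
        rw [if_neg (fun h => ne2y h.2.symm), if_pos ⟨rfl, rfl⟩]
      have G3 : B₂.bd (p (m + 3)) (p 1) = B.bd (p (m + 3)) (p 0) := by
        rw [hB₂]; dsimp only
        rw [if_neg (fun h => ne1y h.1.symm), if_neg (fun h => ne1y h.1.symm), if_pos ⟨rfl, rfl⟩]
      have G4 : B₂.bd (p (m + 3)) (p (m + 2)) = B.bd (p (m + 3)) (p 1) := by
        rw [hB₂]; dsimp only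
        rw [if_neg (fun h => ne1y h.1.symm), if_neg (fun h => ne1y h.1.symm),
          if_neg (fun h => ne1z h.2.symm), if_pos ⟨rfl, rfl⟩]
      have Gdef : ∀ a b : Fin n, ¬(a = p 1 ∧ b = p 2) → ¬(a = p 1 ∧ b = p (m + 3)) →
          ¬(a = p (m + 3) ∧ b = p 1) → ¬(a = p (m + 3) ∧ b = p (m + 2)) →
          B₂.bd a b = B'.bd a b := by
        intro a b h1 h2 h3 h4
        rw [hB₂]; dsimp only
        rw [if_neg h1, if_neg h2, if_neg h3, if_neg h4]
      obtain ⟨B₃, hB₃⟩ : ∃ B₃ : Bigraph n, B₃.bd = (fun a b =>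
          if a = p (m + 3) ∧ b = p 1 then B.bd (p (m + 3)) (p 0)
          else if a = p (m + 3) ∧ b = p (m + 2) then B.bd (p (m + 3)) (p 1)
          else B'.bd a b) := by
        have hsup : ∀ a b : Fin n, (fun a b =>
          if a = p (m + 3) ∧ b = p 1 then B.bd (p (m + 3)) (p 0)
          else if a = p (m + 3) ∧ b = p (m + 2) then B.bd (p (m + 3)) (p 1)
          else B'.bd a b) a b = 0 ↔ B'.bd a b = 0 := by
          intro a b; dsimp only
          by_cases h1 : a = p (m + 3) ∧ b = p 1
          · rw [if_pos h1]
            exact iff_of_false hyx0 (by rw [h1.1, h1.2]; exact hcht')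
          rw [if_neg h1]
          by_cases h2 : a = p (m + 3) ∧ b = p (m + 2)
          · rw [if_pos h2]
            exact iff_of_false hd (by rw [h2.1, h2.2]; exact hyz)
          rw [if_neg h2]
        refine ⟨⟨(fun a b =>
          if a = p (m + 3) ∧ b = p 1 then B.bd (p (m + 3)) (p 0)
          else if a = p (m + 3) ∧ b = p (m + 2) then B.bd (p (m + 3)) (p 1)
          else B'.bd a b), ?_, ?_, fun a b => (hsup a b).trans ((B'.adj_symm a b).trans (hsup b a).symm)⟩, rfl⟩
        · intro a b
          by_cases h1 : a = p (m + 3) ∧ b = p 1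
          · rw [if_pos h1]; exact B.bd_mem _ _
          rw [if_neg h1]
          by_cases h2 : a = p (m + 3) ∧ b = p (m + 2)
          · rw [if_pos h2]; exact B.bd_mem _ _
          rw [if_neg h2]
          exact B'.bd_mem _ _
        · intro v
          rw [if_neg (fun h : v = p (m + 3) ∧ v = p 1 => ne1y (h.2.symm.trans h.1)),
            if_neg (fun h : v = p (m + 3) ∧ v = p (m + 2) => nezy (h.2.symm.trans h.1))]
          exact B'.loopless v
      have H1 : B₃.bd (p (m + 3)) (p 1) = B.bd (p (m + 3)) (p 0) := by
        rw [hB₃]; dsimp only; rw [if_pos ⟨rfl, rfl⟩]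
      have H2 : B₃.bd (p (m + 3)) (p (m + 2)) = B.bd (p (m + 3)) (p 1) := by
        rw [hB₃]; dsimp only
        rw [if_neg (fun h => ne1z h.2.symm), if_pos ⟨rfl, rfl⟩]
      have Hdef : ∀ a b : Fin n, ¬(a = p (m + 3) ∧ b = p 1) → ¬(a = p (m + 3) ∧ b = p (m + 2)) →
          B₃.bd a b = B'.bd a b := by
        intro a b h1 h2
        rw [hB₃]; dsimp only
        rw [if_neg h1, if_neg h2]
      -- Step 1 : B →* B₁ by the IH (replace the chord by the path p1,…,p(m+3))
      refine Relation.ReflTransGen.trans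
        (IH (m + 3) (by omega) (by omega) B B₁ (fun i => p (i + 1)) ?_ ?_ ?_ ?_ ?_ ?_ ?_ ?_ ?_) ?_
      · intro i hi j hj h
        have := hp (i + 1) (by omega) (j + 1) (by omega) h
        omega
      · show B.bd (p 1) (p (m + 3)) ≠ 0
        exact hA
      · intro i hi
        exact hnonedge (i + 1) (by omega)
      · show B₁.bd (p 1) (p (m + 3)) = 0
        exact E1
      · show B₁.bd (p 1) (p 2) = B.bd (p 1) (p (m + 3))
        exact E4
      · show B₁.bd (p (m + 3)) (p (m + 2)) = B.bd (p (m + 3)) (p 1)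
        exact E5
      · intro i hi
        show B₁.bd (p (i + 1)) (p (i + 1 + 1)) ≠ 0
        rcases eq_or_ne i 0 with rfl | hi0
        · show B₁.bd (p 1) (p 2) ≠ 0
          rw [E4]; exact hA
        rcases eq_or_ne (i + 1) (m + 2) with he | hne
        · rw [show i + 1 + 1 = m + 3 from by omega, he]
          rw [Edef1 (p (m + 2)) (p (m + 3)) (hsne (m + 2) (m + 3) 1 (m + 3) (by omega) (by omega) (by omega) (by omega) (by omega) (by omega))
            (hsne (m + 2) (m + 3) 0 1 (by omega) (by omega) (by omega) (by omega) (by omega) (by omega))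
            (hsne (m + 2) (m + 3) 0 (m + 3) (by omega) (by omega) (by omega) (by omega) (by omega) (by omega))
            (fun h => ne1z h.1.symm) (fun h => nezy h.1)]
          exact hzy
        · rw [Edef1 (p (i + 1)) (p (i + 1 + 1)) (hsne (i + 1) (i + 1 + 1) 1 (m + 3) (by omega) (by omega) (by omega) (by omega) (by omega) (by omega))
            (hsne (i + 1) (i + 1 + 1) 0 1 (by omega) (by omega) (by omega) (by omega) (by omega) (by omega))
            (hsne (i + 1) (i + 1 + 1) 0 (m + 3) (by omega) (by omega) (by omega) (by omega) (by omega) (by omega))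
            (fun h => hi0 (by have := hp (i + 1) (by omega) 1 (by omega) h.1; omega))
            (fun h => hne (by have := hp (i + 1) (by omega) (m + 3) (by omega) h.1; omega))]
          exact hedges (i + 1) (by omega)
      · intro i h0 hi
        show B₁.bd (p (i + 1)) (p (i - 1 + 1)) ≠ B₁.bd (p (i + 1)) (p (i + 1 + 1))
        rw [show i - 1 + 1 = i from by omega]
        have ha1 : p (i + 1) ≠ p 1 := hpne (i + 1) 1 (by omega) (by omega) (by omega)
        have hay : p (i + 1) ≠ p (m + 3) := hpne (i + 1) (m + 3) (by omega) (by omega) (by omega)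
        rw [Edef1 (p (i + 1)) (p i) (hsne (i + 1) i 1 (m + 3) (by omega) (by omega) (by omega) (by omega) (by omega) (by omega))
            (hsne (i + 1) i 0 1 (by omega) (by omega) (by omega) (by omega) (by omega) (by omega))
            (hsne (i + 1) i 0 (m + 3) (by omega) (by omega) (by omega) (by omega) (by omega) (by omega))
            (fun h => ha1 h.1) (fun h => hay h.1),
          Edef1 (p (i + 1)) (p (i + 1 + 1)) (hsne (i + 1) (i + 1 + 1) 1 (m + 3) (by omega) (by omega) (by omega) (by omega) (by omega) (by omega))
            (hsne (i + 1) (i + 1 + 1) 0 1 (by omega) (by omega) (by omega) (by omega) (by omega) (by omega))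
            (hsne (i + 1) (i + 1 + 1) 0 (m + 3) (by omega) (by omega) (by omega) (by omega) (by omega) (by omega))
            (fun h => ha1 h.1) (fun h => hay h.1)]
        exact hpath (i + 1) (by omega) (by omega)
      · intro a b hab1 hab2
        show B₁.bd a b = B.bd a b
        by_cases hc1 : s(a, b) = s(p 0, p 1)
        · rcases Sym2.eq_iff.mp hc1 with ⟨rfl, rfl⟩ | ⟨rfl, rfl⟩
          · rw [(B₁.adj_symm _ _).mpr E2]
            exact (hnonedge 0 (by omega)).symm
          · rw [E2]
            exact ((B.adj_symm _ _).mp (hnonedge 0 (by omega))).symm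
        by_cases hc3 : s(a, b) = s(p 0, p (m + 3))
        · exact E0y a b hc3
        rw [Edef1 a b hab1 hc1 hc3
          (fun h => hab2 0 (by omega) (by rw [h.1, h.2]))
          (fun h => hab2 (m + 1) (by omega) (by rw [h.1, h.2]; exact Sym2.eq_swap))]
        refine hrest a b hc3 (fun i hi => ?_)
        cases i with
        | zero => exact hc1
        | succ j => exact hab2 j (by omega)
      -- Step 2 : Λ-subdivision of the edge p0–p(m+3) at p1, from B₁ to B₂
      refine Relation.ReflTransGen.head (Or.inl ⟨p 0, p 1, p (m + 3), ne01.symm, ne1y,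
        by rw [E3]; exact hedge, E2, E1,
        by rw [Gdef (p 0) (p (m + 3)) (fun h => ne01 h.1) (fun h => ne01 h.1)
          (fun h => ne0y h.1) (fun h => ne0y h.1)]; exact hdel,
        by rw [Gdef (p 0) (p 1) (fun h => ne01 h.1) (fun h => ne01 h.1)
          (fun h => ne0y h.1) (fun h => ne0y h.1), E3]; exact hend0,
        by rw [G3, E3'],
        by rw [Gdef (p 1) (p 0) (fun h => ne02 h.2) (fun h => ne0y h.2)
          (fun h => ne1y h.1) (fun h => ne1y h.1)]; exact ha0,
        by rw [Gdef (p 1) (p 0) (fun h => ne02 h.2) (fun h => ne0y h.2)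
          (fun h => ne1y h.1) (fun h => ne1y h.1), G2, neg_neg],
        ?_⟩) ?_
      · intro a b h1 h2 h3
        by_cases hc1 : a = p 1 ∧ b = p 2
        · obtain ⟨ha', hb'⟩ := hc1; subst ha'; subst hb'
          rw [G1, E4]
        by_cases hc2 : a = p 1 ∧ b = p (m + 3)
        · exact absurd (by rw [hc2.1, hc2.2]) h3
        by_cases hc3 : a = p (m + 3) ∧ b = p 1
        · exact absurd (by rw [hc3.1, hc3.2]; exact Sym2.eq_swap) h3
        by_cases hc4 : a = p (m + 3) ∧ b = p (m + 2)
        · obtain ⟨ha', hb'⟩ := hc4; subst ha'; subst hb'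
          rw [G4, E5]
        rw [Gdef a b hc1 hc2 hc3 hc4, Edef1 a b h3 h2 h1 hc1 hc4]
      -- Step 3 : two Γ-operations (or equalities) fixing the signs at p1 and p(m+3)
      refine Relation.ReflTransGen.trans
        (gamma_or_eq B₂ B₃ (p 2) (p 1) (p (m + 3)) ne2y
          (by rw [G1]; exact hA) (by rw [G2]; exact neg_ne_zero.mpr ha0)
          (by rw [Hdef (p 1) (p 2) (fun h => ne1y h.1) (fun h => ne1y h.1), G2]
              exact h12neg)
          (by rw [Hdef (p 1) (p (m + 3)) (fun h => ne1y h.1) (fun h => ne1y h.1),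
                G1, hch])
          ?_)
        (gamma_or_eq B₃ B' (p 1) (p (m + 3)) (p (m + 2)) ne1z
          (by rw [H1]; exact hyx0) (by rw [H2]; exact hd)
          (by rw [H2, hch']) (by rw [H1, hend1])
          (fun a b hab => (Hdef a b (fun h => hab ⟨h.1, Or.inl h.2⟩)
            (fun h => hab ⟨h.1, Or.inr h.2⟩)).symm))
      intro a b hab
      by_cases hc1 : a = p (m + 3) ∧ b = p 1
      · obtain ⟨ha', hb'⟩ := hc1; subst ha'; subst hb'
        rw [H1, G3]
      by_cases hc2 : a = p (m + 3) ∧ b = p (m + 2)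
      · obtain ⟨ha', hb'⟩ := hc2; subst ha'; subst hb'
        rw [H2, G4]
      rw [Hdef a b hc1 hc2, Gdef a b (fun h => hab ⟨h.1, Or.inl h.2⟩)
        (fun h => hab ⟨h.1, Or.inr h.2⟩) hc1 hc2]

/-- Replacing an edge `p 0 – p (k−1)` by a bidirected path `p 0, p 1, …, p (k−1)`
(`k ≥ 3`, the `p i` distinct, no pair `p i, p (i+1)` an edge of `B`), whose local
orientations at the endpoints agree with those of the deleted edge, can be achieved by a
finite sequence of Λ- and Γ-operations. -/
theorem bidirected_path_addition (n k : ℕ) (hk : 3 ≤ k) (B B' : Bigraph n)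
    (p : ℕ → Fin n) (hp : ∀ i < k, ∀ j < k, p i = p j → i = j)
    (hedge : B.bd (p 0) (p (k - 1)) ≠ 0)
    (hnonedge : ∀ i, i + 1 < k → B.bd (p i) (p (i + 1)) = 0)
    (hdel : B'.bd (p 0) (p (k - 1)) = 0)
    (hend0 : B'.bd (p 0) (p 1) = B.bd (p 0) (p (k - 1)))
    (hend1 : B'.bd (p (k - 1)) (p (k - 2)) = B.bd (p (k - 1)) (p 0))
    (hedges : ∀ i, i + 1 < k → B'.bd (p i) (p (i + 1)) ≠ 0)
    (hpath : ∀ i, 0 < i → i + 1 < k → B'.bd (p i) (p (i - 1)) ≠ B'.bd (p i) (p (i + 1)))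
    (hrest : ∀ a b : Fin n, s(a, b) ≠ s(p 0, p (k - 1)) →
      (∀ i, i + 1 < k → s(a, b) ≠ s(p i, p (i + 1))) → B'.bd a b = B.bd a b) :
    Relation.ReflTransGen
      (fun X Y => BLambdaSub X Y ∨ BLambdaSub Y X ∨ GammaStep X Y) B B' :=
  path_aux k hk B B' p hp hedge hnonedge hdel hend0 hend1 hedges hpath hrest
end

section
/- The net-degree sequence of a bidirected graph B on vertex set [n] is uniquely realizable — i.e., B is the only bigraph on [n] with that net-degree sequence — if and only if every node of B is a sink or a source and at most one pair of distinct nodes of B is not joined by an edge. Equivalently, for n ≥ 2, a net-degree sequence d ∈ ℤ^n of a bigraph is uniquely realizable if and only if n−2 ≤ |d_i| ≤ n−1 for all i = 1,…,n and at most two entries of d have absolute value n−2. -/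
/-- A node `v` is a sink if every incident edge points into `v`. -/
def Bigraph.IsSink {n : ℕ} (B : Bigraph n) (v : Fin n) : Prop :=
  ∀ u, B.bd v u = 0 ∨ B.bd v u = 1

/-- A node `v` is a source if every incident edge points away from `v`. -/
def Bigraph.IsSource {n : ℕ} (B : Bigraph n) (v : Fin n) : Prop :=
  ∀ u, B.bd v u = 0 ∨ B.bd v u = -1

namespace Bigraph

open Finset

variable {n : ℕ} {B : Bigraph n} {u v : Fin n}

@[ext]
theorem ext {B B' : Bigraph n} (h : B.bd = B'.bd) : B = B' := by
  cases B; cases B'; cases h; rfl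

def degree (B : Bigraph n) (v : Fin n) : ℕ := #{u | B.bd v u ≠ 0}

def nonNeighbors (B : Bigraph n) (v : Fin n) : Finset (Fin n) := {u | u ≠ v ∧ B.bd v u = 0}

theorem degree_eq_sum_abs (B : Bigraph n) (v : Fin n) : (B.degree v : ℤ) = ∑ u, |B.bd v u| := by
  rw [degree, Finset.card_filter, Nat.cast_sum]
  refine Finset.sum_congr rfl fun u _ => ?_
  rcases B.bd_mem v u with h | h | h <;> simp [h]

theorem abs_netDeg_le_degree (B : Bigraph n) (v : Fin n) : |B.netDeg v| ≤ B.degree v := by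
  rw [degree_eq_sum_abs]
  exact Finset.abs_sum_le_sum_abs _ _

theorem even_degree_sub_netDeg (B : Bigraph n) (v : Fin n) :
    Even ((B.degree v : ℤ) - B.netDeg v) := by
  rw [degree_eq_sum_abs, netDeg, ← Finset.sum_sub_distrib]
  refine Finset.even_sum _ fun u _ => ?_
  rcases B.bd_mem v u with h | h | h <;> simp [h]

theorem netDeg_eq_degree_of_isSink (h : B.IsSink v) : B.netDeg v = B.degree v := by
  rw [degree_eq_sum_abs, netDeg]
  refine Finset.sum_congr rfl fun u _ => ?_
  rcases h u with h | h <;> simp [h]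

theorem netDeg_eq_neg_degree_of_isSource (h : B.IsSource v) : B.netDeg v = -B.degree v := by
  rw [degree_eq_sum_abs, netDeg, ← Finset.sum_neg_distrib]
  refine Finset.sum_congr rfl fun u _ => ?_
  rcases h u with h | h <;> simp [h]

theorem abs_netDeg_lt_degree_of_mixed {a b : Fin n} (ha : B.bd v a = 1) (hb : B.bd v b = -1) :
    |B.netDeg v| < B.degree v := by
  have hle : ∀ s : ℤ, s = 1 ∨ s = -1 → ∀ u, 0 ≤ |B.bd v u| - s * B.bd v u := fun s hs u => by
    rcases B.bd_mem v u with h | h | h <;> rcases hs with rfl | rfl <;> simp [h]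
  have hsum : ∀ s : ℤ, s = 1 ∨ s = -1 → ∀ w, B.bd v w = -s →
      2 ≤ (B.degree v : ℤ) - s * B.netDeg v := fun s hs w hw => by
    rw [degree_eq_sum_abs, netDeg, Finset.mul_sum, ← Finset.sum_sub_distrib]
    calc (2 : ℤ) = |B.bd v w| - s * B.bd v w := by rcases hs with rfl | rfl <;> simp [hw]
      _ ≤ _ := Finset.single_le_sum (fun u _ => hle s hs u) (Finset.mem_univ w)
  have h₁ := hsum 1 (Or.inl rfl) b hb
  have h₂ := hsum (-1) (Or.inr rfl) a (by simp [ha])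
  rw [abs_lt]
  constructor <;> linarith

theorem exists_bd_eq_one_and_neg_one (h : ¬(B.IsSink v ∨ B.IsSource v)) :
    ∃ a b, B.bd v a = 1 ∧ B.bd v b = -1 := by
  simp only [IsSink, IsSource, not_or, not_forall] at h
  obtain ⟨⟨b, hb⟩, ⟨a, ha⟩⟩ := h
  exact ⟨a, b, by have := B.bd_mem v a; tauto, by have := B.bd_mem v b; tauto⟩

theorem abs_netDeg_eq_degree_iff :
    |B.netDeg v| = B.degree v ↔ B.IsSink v ∨ B.IsSource v := by
  refine ⟨fun h => ?_, ?_⟩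
  · by_contra hmixed
    obtain ⟨a, b, ha, hb⟩ := exists_bd_eq_one_and_neg_one hmixed
    exact (abs_netDeg_lt_degree_of_mixed ha hb).ne h
  · rintro (h | h)
    · rw [netDeg_eq_degree_of_isSink h, abs_of_nonneg (by positivity)]
    · rw [netDeg_eq_neg_degree_of_isSource h, abs_neg, abs_of_nonneg (by positivity)]

theorem abs_netDeg_eq_degree_of_degree_le (h : (B.degree v : ℤ) ≤ |B.netDeg v| + 1) :
    |B.netDeg v| = B.degree v := by
  have hle := B.abs_netDeg_le_degree v
  obtain ⟨k, hk⟩ := B.even_degree_sub_netDeg v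
  rcases abs_choice (B.netDeg v) with habs | habs <;> omega

theorem bd_eq_sign_netDeg (h : B.IsSink v ∨ B.IsSource v) (hu : B.bd v u ≠ 0) :
    B.bd v u = Int.sign (B.netDeg v) := by
  have hpos : 0 < B.degree v :=
    Finset.card_pos.mpr ⟨u, Finset.mem_filter.mpr ⟨Finset.mem_univ u, hu⟩⟩
  rcases h with h | h
  · rw [netDeg_eq_degree_of_isSink h, Int.sign_eq_one_of_pos (by omega)]
    exact (h u).resolve_left hu
  · rw [netDeg_eq_neg_degree_of_isSource h, Int.sign_eq_neg_one_of_neg (by omega)]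
    exact (h u).resolve_left hu

theorem degree_add_card_nonNeighbors (B : Bigraph n) (v : Fin n) :
    (B.degree v : ℤ) + #(B.nonNeighbors v) = n - 1 := by
  have hsplit := Finset.card_filter_add_card_filter_not
    (s := Finset.univ.erase v) (fun u => B.bd v u ≠ 0)
  have hdeg : (univ.erase v).filter (B.bd v · ≠ 0) = univ.filter (B.bd v · ≠ 0) := by
    ext u
    by_cases hu : u = v
    · simp [hu, B.loopless]
    · simp [hu]
  have hnon : (univ.erase v).filter (¬B.bd v · ≠ 0) = B.nonNeighbors v := by
    ext u; simp [nonNeighbors]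
  rw [hdeg, hnon, Finset.card_erase_of_mem (Finset.mem_univ v), Finset.card_univ,
    Fintype.card_fin] at hsplit
  have : 1 ≤ n := Nat.one_le_iff_ne_zero.mpr (by rintro rfl; exact v.elim0)
  rw [degree]
  omega

theorem degree_le (B : Bigraph n) (v : Fin n) : (B.degree v : ℤ) ≤ n - 1 := by
  linarith [B.degree_add_card_nonNeighbors v]

theorem degree_lt_iff_exists_nonAdj :
    (B.degree v : ℤ) < n - 1 ↔ ∃ u, u ≠ v ∧ B.bd v u = 0 := by
  rw [← B.degree_add_card_nonNeighbors v, lt_add_iff_pos_right, Nat.cast_pos, Finset.card_pos]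
  simp [Finset.Nonempty, nonNeighbors]

theorem sub_two_le_degree_iff : (n : ℤ) - 2 ≤ B.degree v ↔
    ∀ u w, u ≠ v → w ≠ v → B.bd v u = 0 → B.bd v w = 0 → u = w := by
  have h := B.degree_add_card_nonNeighbors v
  have : (n : ℤ) - 2 ≤ B.degree v ↔ #(B.nonNeighbors v) ≤ 1 := by omega
  rw [this, Finset.card_le_one]
  simp only [nonNeighbors, Finset.mem_filter, Finset.mem_univ, true_and, and_imp]
  exact ⟨fun h u w hu hw h₁ h₂ => h u hu h₁ w hw h₂, fun h u hu h₁ w hw h₂ => h u w hu hw h₁ h₂⟩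

def update (B : Bigraph n) {a b : Fin n} (hab : a ≠ b) (x y : ℤ) (hx : x = -1 ∨ x = 0 ∨ x = 1)
    (hy : y = -1 ∨ y = 0 ∨ y = 1) (hxy : x = 0 ↔ y = 0) : Bigraph n where
  bd u w := if u = a ∧ w = b then x else if u = b ∧ w = a then y else B.bd u w
  bd_mem u w := by split_ifs <;> first | assumption | exact B.bd_mem u w
  loopless u := by
    rw [if_neg fun h => hab (h.1.symm.trans h.2), if_neg fun h => hab (h.2.symm.trans h.1)]
    exact B.loopless u
  adj_symm u w := by
    by_cases h₁ : u = a ∧ w = b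
    · obtain ⟨rfl, rfl⟩ := h₁; simp [hab, hxy]
    by_cases h₂ : u = b ∧ w = a
    · obtain ⟨rfl, rfl⟩ := h₂; simp [hab, hxy]
    rw [if_neg h₁, if_neg h₂, if_neg fun h => h₂ h.symm, if_neg fun h => h₁ h.symm]
    exact B.adj_symm u w

section update

variable {a b : Fin n} {hab : a ≠ b} {x y : ℤ} {hx : x = -1 ∨ x = 0 ∨ x = 1}
  {hy : y = -1 ∨ y = 0 ∨ y = 1} {hxy : x = 0 ↔ y = 0}

@[simp]
theorem update_bd :
    (B.update hab x y hx hy hxy).bd u v =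
      if u = a ∧ v = b then x else if u = b ∧ v = a then y else B.bd u v :=
  rfl

theorem netDeg_update : (B.update hab x y hx hy hxy).netDeg v =
    B.netDeg v + (if v = a then x - B.bd a b else 0) + (if v = b then y - B.bd b a else 0) := by
  have hrow : ∀ u, (B.update hab x y hx hy hxy).bd v u = B.bd v u +
      (if u = b then (if v = a then x - B.bd a b else 0) else 0) +
      (if u = a then (if v = b then y - B.bd b a else 0) else 0) := fun u => by
    by_cases hva : v = a <;> by_cases hvb : v = b <;> by_cases hua : u = a <;>
      by_cases hub : u = b <;> subst_vars <;> first | exact absurd rfl hab | simp_all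
  simp only [netDeg, hrow, Finset.sum_add_distrib, Finset.sum_ite_eq', Finset.mem_univ, if_true]

end update

def IsUniquelyRealizable (B : Bigraph n) : Prop :=
  ∀ B' : Bigraph n, B'.netDeg = B.netDeg → B' = B

theorem not_isUniquelyRealizable_of_bd_ne {B' : Bigraph n} (h : B'.netDeg = B.netDeg)
    (hne : B'.bd u v ≠ B.bd u v) : ¬B.IsUniquelyRealizable :=
  fun hB => hne (by rw [hB B' h])

theorem bd_ne_zero_comm (h : B.bd u v ≠ 0) : B.bd v u ≠ 0 :=
  fun h' => h ((B.adj_symm u v).mpr h')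

-- Exchange the signs at `v` of the edges `va` and `vb`.
theorem not_isUniquelyRealizable_of_mixed {a b : Fin n} (ha : B.bd v a = 1)
    (hb : B.bd v b = -1) : ¬B.IsUniquelyRealizable := by
  have hva : v ≠ a := by rintro rfl; simp [B.loopless] at ha
  have hvb : v ≠ b := by rintro rfl; simp [B.loopless] at hb
  have hab : a ≠ b := by rintro rfl; omega
  have hav := bd_ne_zero_comm (B := B) (u := v) (v := a) (by omega)
  have hbv := bd_ne_zero_comm (B := B) (u := v) (v := b) (by omega)
  let B₁ := B.update hva (-1) (B.bd a v) (by norm_num) (B.bd_mem a v)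
    (iff_of_false (by norm_num) hav)
  let B₂ := B₁.update hvb 1 (B.bd b v) (by norm_num) (B.bd_mem b v)
    (iff_of_false (by norm_num) hbv)
  refine not_isUniquelyRealizable_of_bd_ne (B' := B₂) (u := v) (v := a) ?_
    (by simp [B₂, B₁, hab, hva.symm, ha])
  funext w
  simp only [B₂, B₁, netDeg_update, update_bd]
  by_cases hwv : w = v <;> by_cases hwa : w = a <;> by_cases hwb : w = b <;> subst_vars <;>
    simp_all

-- Add the triangle `abc` with one edge of each sign at every node.
theorem not_isUniquelyRealizable_of_independent_triple {a b c : Fin n} (hab : a ≠ b)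
    (hac : a ≠ c) (hbc : b ≠ c) (h₁ : B.bd a b = 0) (h₂ : B.bd a c = 0) (h₃ : B.bd b c = 0) :
    ¬B.IsUniquelyRealizable := by
  have h₁' := (B.adj_symm a b).mp h₁
  have h₂' := (B.adj_symm a c).mp h₂
  have h₃' := (B.adj_symm b c).mp h₃
  let B₁ := B.update hab 1 1 (by norm_num) (by norm_num) (by norm_num)
  let B₂ := B₁.update hac (-1) (-1) (by norm_num) (by norm_num) (by norm_num)
  let B₃ := B₂.update hbc (-1) 1 (by norm_num) (by norm_num) (by norm_num)
  refine not_isUniquelyRealizable_of_bd_ne (B' := B₃) (u := a) (v := b) ?_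
    (by simp [B₃, B₂, B₁, hab, hac, hbc, h₁])
  funext w
  simp only [B₃, B₂, B₁, netDeg_update, update_bd]
  simp only [hab, hbc, hab.symm, hac.symm, hbc.symm, h₁, h₂, h₁', h₂', and_self, and_false,
    false_and, if_false]
  split_ifs <;> subst_vars <;> simp_all

-- Replace the edge `bc` by the path `bac`; `b`, `c` keep their signs, `a` gets one of each sign.
theorem not_isUniquelyRealizable_of_nonAdj_nonAdj_adj {a b c : Fin n} (hab : a ≠ b)
    (hac : a ≠ c) (hbc : b ≠ c) (h₁ : B.bd a b = 0) (h₂ : B.bd a c = 0) (h₃ : B.bd b c ≠ 0) :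
    ¬B.IsUniquelyRealizable := by
  have h₁' := (B.adj_symm a b).mp h₁
  have h₂' := (B.adj_symm a c).mp h₂
  have h₃' := bd_ne_zero_comm h₃
  let B₁ := B.update hab 1 (B.bd b c) (by norm_num) (B.bd_mem b c) (iff_of_false (by norm_num) h₃)
  let B₂ := B₁.update hac (-1) (B.bd c b) (by norm_num) (B.bd_mem c b)
    (iff_of_false (by norm_num) h₃')
  let B₃ := B₂.update hbc 0 0 (by norm_num) (by norm_num) Iff.rfl
  refine not_isUniquelyRealizable_of_bd_ne (B' := B₃) (u := a) (v := b) ?_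
    (by simp [B₃, B₂, B₁, hab, hac, hbc, h₁])
  funext w
  simp only [B₃, B₂, B₁, netDeg_update, update_bd]
  simp only [hab, hbc, hab.symm, hac.symm, hbc.symm, h₁, h₂, h₁', h₂', and_self, and_false,
    false_and, if_false]
  split_ifs <;> subst_vars <;> simp_all

-- Replace the edges `ac`, `bd` by `ab`, `cd`, every node keeping the sign of the edge it loses.
theorem not_isUniquelyRealizable_of_nonAdj_nonAdj_adj_adj {a b c d : Fin n} (hab : a ≠ b)
    (hac : a ≠ c) (had : a ≠ d) (hbc : b ≠ c) (hbd : b ≠ d) (hcd : c ≠ d) (h₁ : B.bd a b = 0)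
    (h₂ : B.bd c d = 0) (h₃ : B.bd a c ≠ 0) (h₄ : B.bd b d ≠ 0) : ¬B.IsUniquelyRealizable := by
  have h₁' := (B.adj_symm a b).mp h₁
  have h₂' := (B.adj_symm c d).mp h₂
  have h₃' := bd_ne_zero_comm h₃
  have h₄' := bd_ne_zero_comm h₄
  let B₁ := B.update hab (B.bd a c) (B.bd b d) (B.bd_mem a c) (B.bd_mem b d) (iff_of_false h₃ h₄)
  let B₂ := B₁.update hcd (B.bd c a) (B.bd d b) (B.bd_mem c a) (B.bd_mem d b)
    (iff_of_false h₃' h₄')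
  let B₃ := B₂.update hac 0 0 (by norm_num) (by norm_num) Iff.rfl
  let B₄ := B₃.update hbd 0 0 (by norm_num) (by norm_num) Iff.rfl
  refine not_isUniquelyRealizable_of_bd_ne (B' := B₄) (u := a) (v := b) ?_
    (by simp [B₄, B₃, B₂, B₁, hab, hac, had, hbc, hbd, h₁, h₃])
  funext w
  simp only [B₄, B₃, B₂, B₁, netDeg_update, update_bd]
  simp only [hab, hac, had, hbc, hbd, hcd, hab.symm, hac.symm, had.symm, hbc.symm, hbd.symm,
    hcd.symm, h₁, h₂, h₁', h₂', and_self, and_false, false_and, if_false]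
  split_ifs <;> subst_vars <;> simp_all <;> omega

theorem not_isUniquelyRealizable_of_two_nonAdj_at {a b c : Fin n} (hab : a ≠ b) (hac : a ≠ c)
    (hbc : b ≠ c) (h₁ : B.bd a b = 0) (h₂ : B.bd a c = 0) : ¬B.IsUniquelyRealizable := by
  by_cases h₃ : B.bd b c = 0
  · exact not_isUniquelyRealizable_of_independent_triple hab hac hbc h₁ h₂ h₃
  · exact not_isUniquelyRealizable_of_nonAdj_nonAdj_adj hab hac hbc h₁ h₂ h₃

theorem not_isUniquelyRealizable_of_ne_nonEdges {a b c d : Fin n} (hab : a ≠ b) (hcd : c ≠ d)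
    (h₁ : B.bd a b = 0) (h₂ : B.bd c d = 0) (hne : s(a, b) ≠ s(c, d)) :
    ¬B.IsUniquelyRealizable := by
  have h₁' := (B.adj_symm a b).mp h₁
  have h₂' := (B.adj_symm c d).mp h₂
  by_cases hac : a = c
  · subst hac
    exact not_isUniquelyRealizable_of_two_nonAdj_at hab hcd (by rintro rfl; exact hne rfl) h₁ h₂
  by_cases had : a = d
  · subst had
    exact not_isUniquelyRealizable_of_two_nonAdj_at hab hcd.symm
      (by rintro rfl; exact hne Sym2.eq_swap) h₁ h₂'
  by_cases hbc : b = c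
  · subst hbc
    exact not_isUniquelyRealizable_of_two_nonAdj_at hab.symm hcd
      (by rintro rfl; exact hne Sym2.eq_swap) h₁' h₂
  by_cases hbd : b = d
  · subst hbd
    exact not_isUniquelyRealizable_of_two_nonAdj_at hab.symm hcd.symm hac h₁' h₂'
  by_cases h₃ : B.bd a c = 0
  · exact not_isUniquelyRealizable_of_two_nonAdj_at hab hac hbc h₁ h₃
  by_cases h₄ : B.bd b d = 0
  · exact not_isUniquelyRealizable_of_two_nonAdj_at hab.symm hbd had h₁' h₄
  exact not_isUniquelyRealizable_of_nonAdj_nonAdj_adj_adj hab hac had hbc hbd hcd h₁ h₂ h₃ h₄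

theorem isSink_or_isSource_of_isUniquelyRealizable (hB : B.IsUniquelyRealizable) (v : Fin n) :
    B.IsSink v ∨ B.IsSource v := by
  by_contra hmixed
  obtain ⟨a, b, ha, hb⟩ := exists_bd_eq_one_and_neg_one hmixed
  exact not_isUniquelyRealizable_of_mixed ha hb hB

def AtMostOneNonEdge (B : Bigraph n) : Prop :=
  ∀ ⦃a b c d : Fin n⦄, a ≠ b → c ≠ d → B.bd a b = 0 → B.bd c d = 0 → s(a, b) = s(c, d)

theorem ncard_nonEdges_le_one_iff :
    {p : Fin n × Fin n | p.1 < p.2 ∧ B.bd p.1 p.2 = 0}.ncard ≤ 1 ↔ B.AtMostOneNonEdge := by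
  rw [Set.ncard_le_one_iff]
  constructor
  · intro h a b c d hab hcd h₁ h₂
    have hsorted : ∀ {a b : Fin n}, a ≠ b → B.bd a b = 0 →
        ∃ p ∈ {p : Fin n × Fin n | p.1 < p.2 ∧ B.bd p.1 p.2 = 0}, s(a, b) = s(p.1, p.2) := by
      intro a b hab h
      rcases hab.lt_or_gt with hlt | hlt
      · exact ⟨(a, b), ⟨hlt, h⟩, rfl⟩
      · exact ⟨(b, a), ⟨hlt, (B.adj_symm a b).mp h⟩, Sym2.eq_swap⟩
    obtain ⟨p, hp, hab'⟩ := hsorted hab h₁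
    obtain ⟨q, hq, hcd'⟩ := hsorted hcd h₂
    rw [hab', hcd', h hp hq]
  · intro h p q hp hq
    rcases Sym2.eq_iff.mp (h hp.1.ne hq.1.ne hp.2 hq.2) with ⟨h₁, h₂⟩ | ⟨h₁, h₂⟩
    · exact Prod.ext h₁ h₂
    · exact absurd (h₂ ▸ h₁ ▸ hq.1) (lt_asymm hp.1)

theorem atMostOneNonEdge_of_isUniquelyRealizable (hB : B.IsUniquelyRealizable) :
    B.AtMostOneNonEdge := by
  intro a b c d hab hcd h₁ h₂
  by_contra hne
  exact not_isUniquelyRealizable_of_ne_nonEdges hab hcd h₁ h₂ hne hB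

theorem sub_two_le_degree_of_atMostOneNonEdge (hB : B.AtMostOneNonEdge) (v : Fin n) :
    (n : ℤ) - 2 ≤ B.degree v :=
  sub_two_le_degree_iff.mpr fun _ _ hu hw h₁ h₂ => by
    rcases Sym2.eq_iff.mp (hB hu.symm hw.symm h₁ h₂) with ⟨_, h⟩ | ⟨h, _⟩
    · exact h
    · exact absurd h.symm hw

theorem isUniquelyRealizable_of_atMostOneNonEdge (hpure : ∀ v, B.IsSink v ∨ B.IsSource v)
    (hB : B.AtMostOneNonEdge) : B.IsUniquelyRealizable := by
  intro B' hd
  have hdeg : ∀ v, B'.degree v = B.degree v ∧ (B'.IsSink v ∨ B'.IsSource v) := fun v => by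
    have h₁ := abs_netDeg_eq_degree_iff.mpr (hpure v)
    have h₂ := B'.degree_le v
    have h₃ := sub_two_le_degree_of_atMostOneNonEdge hB v
    have h₄ : |B'.netDeg v| = B'.degree v :=
      abs_netDeg_eq_degree_of_degree_le (by rw [congrFun hd v]; omega)
    exact ⟨by rw [congrFun hd v] at h₄; omega, abs_netDeg_eq_degree_iff.mp h₄⟩
  have hnon : ∀ v, (∃ u, u ≠ v ∧ B'.bd v u = 0) ↔ ∃ u, u ≠ v ∧ B.bd v u = 0 := fun v => by
    rw [← degree_lt_iff_exists_nonAdj, ← degree_lt_iff_exists_nonAdj, (hdeg v).1]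
  have hsub : ∀ u v, u ≠ v → B'.bd u v = 0 → B.bd u v = 0 := fun u v huv h => by
    obtain ⟨x, hxu, hx⟩ := (hnon u).mp ⟨v, huv.symm, h⟩
    obtain ⟨y, hyv, hy⟩ := (hnon v).mp ⟨u, huv, (B'.adj_symm u v).mp h⟩
    rcases Sym2.eq_iff.mp (hB hxu.symm hyv.symm hx hy) with ⟨h, _⟩ | ⟨_, h⟩
    · exact absurd h huv
    · rwa [← h]
  have hzero : ∀ u v, B'.bd u v = 0 ↔ B.bd u v = 0 := fun u v => by
    rcases eq_or_ne u v with rfl | huv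
    · simp [B.loopless, B'.loopless]
    refine ⟨hsub u v huv, fun h => ?_⟩
    obtain ⟨w, hwu, hw⟩ := (hnon u).mpr ⟨v, huv.symm, h⟩
    rcases Sym2.eq_iff.mp (hB huv hwu.symm h (hsub u w hwu.symm hw)) with ⟨_, h'⟩ | ⟨h', _⟩
    · rwa [h']
    · exact absurd h'.symm hwu
  ext u v
  by_cases h : B.bd u v = 0
  · rw [h, (hzero u v).mpr h]
  · rw [bd_eq_sign_netDeg (hdeg u).2 ((hzero u v).not.mpr h), bd_eq_sign_netDeg (hpure u) h, hd]

theorem isUniquelyRealizable_iff : B.IsUniquelyRealizable ↔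
    (∀ v, B.IsSink v ∨ B.IsSource v) ∧ B.AtMostOneNonEdge :=
  ⟨fun hB => ⟨isSink_or_isSource_of_isUniquelyRealizable hB,
      atMostOneNonEdge_of_isUniquelyRealizable hB⟩,
    fun ⟨hpure, hB⟩ => isUniquelyRealizable_of_atMostOneNonEdge hpure hB⟩

theorem existsUnique_netDeg_eq_iff :
    (∃! B' : Bigraph n, B'.netDeg = B.netDeg) ↔ B.IsUniquelyRealizable :=
  ⟨fun h _ hB' => h.unique hB' rfl, fun h => ⟨B, rfl, h⟩⟩

theorem atMostOneNonEdge_iff_ncard_le_two (hdeg : ∀ v, (n : ℤ) - 2 ≤ B.degree v) :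
    B.AtMostOneNonEdge ↔ {v | (B.degree v : ℤ) = n - 2}.ncard ≤ 2 := by
  have hmem : ∀ v, (B.degree v : ℤ) = n - 2 ↔ ∃ u, u ≠ v ∧ B.bd v u = 0 := fun v => by
    rw [← degree_lt_iff_exists_nonAdj]
    have := hdeg v
    omega
  simp only [hmem]
  rw [← not_lt, Set.two_lt_ncard_iff]
  constructor
  · rintro hB ⟨x, y, z, ⟨u, hux, hu⟩, ⟨w, hwy, hw⟩, ⟨t, htz, ht⟩, hxy, hxz, hyz⟩
    rcases Sym2.eq_iff.mp (hB hux.symm hwy.symm hu hw) with ⟨h, _⟩ | ⟨_, rfl⟩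
    · exact hxy h
    rcases Sym2.eq_iff.mp (hB hux.symm htz.symm hu ht) with ⟨h, _⟩ | ⟨_, h⟩
    · exact hxz h
    · exact hyz h
  · intro h a b c d hab hcd h₁ h₂
    by_contra hne
    have hone := fun v => sub_two_le_degree_iff.mp (hdeg v)
    refine h ⟨a, b, c, ⟨b, hab.symm, h₁⟩, ⟨a, hab, (B.adj_symm a b).mp h₁⟩, ⟨d, hcd.symm, h₂⟩,
      hab, ?_, ?_⟩
    · rintro rfl
      exact hne (by rw [hone a b d hab.symm hcd.symm h₁ h₂])
    · rintro rfl
      exact hne (by rw [hone b a d hab hcd.symm ((B.adj_symm a b).mp h₁) h₂, Sym2.eq_swap])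

theorem forall_isSink_or_isSource_and_atMostOneNonEdge_iff :
    ((∀ v, B.IsSink v ∨ B.IsSource v) ∧ B.AtMostOneNonEdge) ↔
      (∀ i, (n : ℤ) - 2 ≤ |B.netDeg i| ∧ |B.netDeg i| ≤ n - 1) ∧
        {i | |B.netDeg i| = (n : ℤ) - 2}.ncard ≤ 2 := by
  constructor
  · rintro ⟨hpure, hB⟩
    have hdeg := sub_two_le_degree_of_atMostOneNonEdge hB
    simp only [fun v => abs_netDeg_eq_degree_iff.mpr (hpure v)]
    exact ⟨fun i => ⟨hdeg i, B.degree_le i⟩, (atMostOneNonEdge_iff_ncard_le_two hdeg).mp hB⟩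
  · rintro ⟨hbounds, hcard⟩
    have habs : ∀ v, |B.netDeg v| = B.degree v := fun v =>
      abs_netDeg_eq_degree_of_degree_le (by linarith [B.degree_le v, (hbounds v).1])
    simp only [habs] at hbounds hcard
    exact ⟨fun v => abs_netDeg_eq_degree_iff.mp (habs v),
      (atMostOneNonEdge_iff_ncard_le_two fun v => (hbounds v).1).mpr hcard⟩

end Bigraph

/-- (1) The net-degree sequence of a bigraph `B` is uniquely realizable iff every node
of `B` is a sink or a source and at most one pair of distinct nodes is not joined by an
edge. (2) Equivalently, for `n ≥ 2`, a net-degree sequence `d` of a bigraph is uniquely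
realizable iff `n−2 ≤ |dᵢ| ≤ n−1` for all `i` and at most two entries of `d` have
absolute value `n−2`. -/
theorem uniquely_realizable_bigraph_characterization (n : ℕ) :
    (∀ B : Bigraph n,
      (∀ B' : Bigraph n, B'.netDeg = B.netDeg → B' = B) ↔
        ((∀ v, B.IsSink v ∨ B.IsSource v) ∧
          {p : Fin n × Fin n | p.1 < p.2 ∧ B.bd p.1 p.2 = 0}.ncard ≤ 1)) ∧
    (2 ≤ n → ∀ d : Fin n → ℤ, (∃ B : Bigraph n, B.netDeg = d) →
      ((∃! B : Bigraph n, B.netDeg = d) ↔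
        ((∀ i, (n : ℤ) - 2 ≤ |d i| ∧ |d i| ≤ (n : ℤ) - 1) ∧
          {i : Fin n | |d i| = (n : ℤ) - 2}.ncard ≤ 2))) := by
  refine ⟨fun B => Bigraph.isUniquelyRealizable_iff.trans
      (and_congr_right' Bigraph.ncard_nonEdges_le_one_iff.symm),
    fun _ d ⟨B, hB⟩ => ?_⟩
  subst hB
  rw [Bigraph.existsUnique_netDeg_eq_iff, Bigraph.isUniquelyRealizable_iff,
    Bigraph.forall_isSink_or_isSource_and_atMostOneNonEdge_iff]
end

section
/- For n ≥ 3, the number of uniquely realizable net-degree sequences of bidirected graphs on vertex set [n] equals 2^n · C(n,2) + 2^n. -/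
namespace BigraphUR

variable {n : ℕ}

lemma bigraph_ext {A B : Bigraph n} (h : A.bd = B.bd) : A = B := by
  cases A; cases B; simpa using h

/-- If `g` agrees with `f` off two points and the pair-sums agree, sums agree. -/
lemma sum_eq_of_off (f g : Fin n → ℤ) (a b : Fin n) (hab : a ≠ b)
    (h : ∀ i, i ≠ a → i ≠ b → g i = f i) (hsum : g a + g b = f a + f b) :
    ∑ i, g i = ∑ i, f i := by
  have key : ∑ i, (g i - f i) = ∑ i ∈ ({a, b} : Finset (Fin n)), (g i - f i) := by
    refine (Finset.sum_subset (Finset.subset_univ _) ?_).symm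
    intro i _ hi
    simp only [Finset.mem_insert, Finset.mem_singleton] at hi
    push_neg at hi
    rw [h i hi.1 hi.2]; ring
  rw [Finset.sum_sub_distrib, Finset.sum_pair hab] at key
  linarith

lemma all_one_of_sum (t : Finset (Fin n)) (f : Fin n → ℤ) (h1 : ∀ i ∈ t, f i ≤ 1)
    (hsum : ∑ i ∈ t, f i = t.card) : ∀ i ∈ t, f i = 1 := by
  have h0 : ∀ i ∈ t, 0 ≤ 1 - f i := fun i hi => by linarith [h1 i hi]
  have hz : ∑ i ∈ t, (1 - f i) = 0 := by
    rw [Finset.sum_sub_distrib, hsum]; simp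
  intro i hi
  have := (Finset.sum_eq_zero_iff_of_nonneg h0).mp hz i hi
  linarith

lemma forced_pair (t : Finset (Fin n)) (b : Fin n) (hb : b ∈ t) (f : Fin n → ℤ)
    (h1 : ∀ i ∈ t, f i ≤ 1) (hlow : ∀ i ∈ t, -1 ≤ f i)
    (hne : ∀ i ∈ t, i ≠ b → f i ≠ 0)
    (hsum : ∑ i ∈ t, f i = (t.card : ℤ) - 1) :
    f b = 0 ∧ ∀ i ∈ t, i ≠ b → f i = 1 := by
  have h0 : ∀ i ∈ t, 0 ≤ 1 - f i := fun i hi => by linarith [h1 i hi]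
  have hgs : ∑ i ∈ t, (1 - f i) = 1 := by
    rw [Finset.sum_sub_distrib, hsum]; simp
  have hone : ∀ i ∈ t, i ≠ b → f i = 1 := by
    intro i hi hib
    have hA := h1 i hi; have hB := hlow i hi; have hC := hne i hi hib
    by_contra hne1
    have hfi : f i = -1 := by omega
    have hle : 1 - f i ≤ ∑ j ∈ t, (1 - f j) := Finset.single_le_sum h0 hi
    rw [hfi, hgs] at hle; norm_num at hle
  refine ⟨?_, hone⟩
  have hcard : 1 ≤ t.card := Finset.card_pos.mpr ⟨b, hb⟩
  have herase : ∑ i ∈ t.erase b, f i = (t.card : ℤ) - 1 := by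
    rw [Finset.sum_congr rfl (fun i hi =>
      hone i (Finset.mem_of_mem_erase hi) (Finset.ne_of_mem_erase hi))]
    rw [Finset.sum_const, Finset.card_erase_of_mem hb]
    simp only [nsmul_eq_mul, mul_one]
    omega
  have := Finset.sum_erase_add t f hb
  omega

/-- generic forced-row lemma: entries in `{-1,0,1}` on `t` summing to `±|t|` are all `±1`. -/
lemma row_forced (c : ℤ) (hc : c = 1 ∨ c = -1) (t : Finset (Fin n)) (f : Fin n → ℤ)
    (hmem : ∀ i ∈ t, f i = -1 ∨ f i = 0 ∨ f i = 1)
    (hsum : ∑ i ∈ t, f i = (t.card : ℤ) * c) : ∀ i ∈ t, f i = c := by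
  rcases hc with rfl | rfl
  · exact all_one_of_sum t f (fun i hi => by rcases hmem i hi with h|h|h <;> omega)
      (by rw [hsum]; ring)
  · intro i hi
    have key := all_one_of_sum t (fun i => -f i)
      (fun i hi => by show -f i ≤ 1; rcases hmem i hi with h|h|h <;> omega)
      (by show ∑ i ∈ t, -f i = _; rw [Finset.sum_neg_distrib, hsum]; push_cast; ring) i hi
    have key2 : -f i = 1 := key
    omega

lemma row_forced_pair (c : ℤ) (hc : c = 1 ∨ c = -1) (t : Finset (Fin n)) (b : Fin n)
    (hb : b ∈ t) (f : Fin n → ℤ)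
    (hmem : ∀ i ∈ t, f i = -1 ∨ f i = 0 ∨ f i = 1)
    (hne : ∀ i ∈ t, i ≠ b → f i ≠ 0)
    (hsum : ∑ i ∈ t, f i = ((t.card : ℤ) - 1) * c) :
    f b = 0 ∧ ∀ i ∈ t, i ≠ b → f i = c := by
  rcases hc with rfl | rfl
  · exact forced_pair t b hb f (fun i hi => by rcases hmem i hi with h|h|h <;> omega)
      (fun i hi => by rcases hmem i hi with h|h|h <;> omega) hne (by rw [hsum]; ring)
  · have key := forced_pair t b hb (fun i => -f i)
      (fun i hi => by show -f i ≤ 1; rcases hmem i hi with h|h|h <;> omega)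
      (fun i hi => by show -1 ≤ -f i; rcases hmem i hi with h|h|h <;> omega)
      (fun i hi hib => by show -f i ≠ 0; have := hne i hi hib; omega)
      (by show ∑ i ∈ t, -f i = _; rw [Finset.sum_neg_distrib, hsum]; push_cast; ring)
    have k1 : -f b = 0 := key.1
    refine ⟨by omega, fun i hi hib => ?_⟩
    have k2 : -f i = 1 := key.2 i hi hib
    omega

/-! ### The models: complete and complete-minus-one-edge bigraphs with constant signs -/

abbrev Pair (n : ℕ) := {p : Finset (Fin n) // p.card = 2}

def sg (s : Fin n → Bool) (v : Fin n) : ℤ := if s v then 1 else -1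

lemma sg_ne_zero (s : Fin n → Bool) (v : Fin n) : sg s v ≠ 0 := by
  unfold sg; split_ifs <;> decide

lemma sg_mem (s : Fin n → Bool) (v : Fin n) : sg s v = 1 ∨ sg s v = -1 := by
  unfold sg; split_ifs <;> simp

def missB (o : Option (Pair n)) (u v : Fin n) : Bool :=
  match o with
  | none => false
  | some p => decide (u ∈ p.1) && decide (v ∈ p.1)

lemma missB_symm (o : Option (Pair n)) (u v : Fin n) : missB o u v = missB o v u := by
  cases o <;> simp [missB, Bool.and_comm]

def model (s : Fin n → Bool) (o : Option (Pair n)) : Bigraph n where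
  bd u v := if u = v then 0 else if missB o u v then 0 else sg s u
  bd_mem := by
    intro u v; unfold sg; split_ifs <;> simp
  loopless := by intro v; simp
  adj_symm := by
    intro u v
    by_cases h : u = v
    · subst h; simp
    · have h' : ¬ v = u := fun e => h e.symm
      simp only [if_neg h, if_neg h', missB_symm o u v]
      split_ifs
      · simp
      · simp [sg_ne_zero]

lemma model_bd_of_ne {s : Fin n → Bool} {o : Option (Pair n)} {u v : Fin n} (h : u ≠ v)
    (hm : missB o u v = false) : (model s o).bd u v = sg s u := by
  simp [model, h, hm]

lemma sum_offdiag_const (v : Fin n) (f : Fin n → ℤ) (c : ℤ) (h0 : f v = 0)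
    (hc : ∀ u, u ≠ v → f u = c) : ∑ u, f u = ((n : ℤ) - 1) * c := by
  rw [← Finset.sum_erase_add _ _ (Finset.mem_univ v), h0, add_zero]
  rw [Finset.sum_congr rfl (fun u hu => hc u (Finset.ne_of_mem_erase hu))]
  rw [Finset.sum_const, Finset.card_erase_of_mem (Finset.mem_univ v)]
  simp only [Finset.card_univ, Fintype.card_fin, nsmul_eq_mul]
  have : 0 < n := v.pos
  push_cast [Nat.cast_sub this]
  ring

lemma sum_offpair_const (p : Finset (Fin n)) (hp : p.card = 2) (f : Fin n → ℤ) (c : ℤ)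
    (h0 : ∀ u ∈ p, f u = 0) (hc : ∀ u ∉ p, f u = c) : ∑ u, f u = ((n : ℤ) - 2) * c := by
  rw [← Finset.sum_sdiff (Finset.subset_univ p)]
  rw [Finset.sum_congr rfl (fun u hu => hc u (Finset.mem_sdiff.mp hu).2)]
  rw [Finset.sum_congr rfl (fun u hu => h0 u hu), Finset.sum_const_zero, add_zero]
  rw [Finset.sum_const, Finset.card_sdiff_of_subset (Finset.subset_univ p)]
  simp only [Finset.card_univ, Fintype.card_fin, nsmul_eq_mul, hp]
  have h2 : 2 ≤ n := by
    have := Finset.card_le_card (Finset.subset_univ p)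
    simpa [hp] using this
  push_cast [Nat.cast_sub h2]
  ring

lemma netDeg_model_row (s : Fin n → Bool) (o : Option (Pair n)) (v : Fin n) :
    (model s o).netDeg v =
      ((n : ℤ) - if missB o v v then 2 else 1) * sg s v := by
  rcases o with _ | p
  · simp only [missB, Bool.false_eq_true, if_false]
    exact sum_offdiag_const v _ (sg s v) ((model s none).loopless v)
      (fun u hu => model_bd_of_ne (fun e => hu e.symm) rfl)
  · by_cases hv : v ∈ p.1
    · have hm : missB (some p) v v = true := by simp [missB, hv]
      rw [hm, if_pos rfl]
      refine sum_offpair_const p.1 p.2 _ (sg s v) ?_ ?_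
      · intro u hu
        by_cases huv : v = u
        · subst huv; exact (model s (some p)).loopless v
        · simp [model, huv, missB, hv, hu]
      · intro u hu
        have huv : v ≠ u := fun e => hu (e ▸ hv)
        exact model_bd_of_ne huv (by simp [missB, hu])
    · have hm : missB (some p) v v = false := by simp [missB, hv]
      rw [hm, if_neg (by simp)]
      exact sum_offdiag_const v _ (sg s v) ((model s (some p)).loopless v)
        (fun u hu => model_bd_of_ne (fun e => hu e.symm) (by simp [missB, hv]))

/-! ### Uniqueness: any bigraph with the net-degree sequence of a model equals the model -/

lemma erase_card_int (v : Fin n) : ((Finset.univ.erase v).card : ℤ) = (n : ℤ) - 1 := by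
  rw [Finset.card_erase_of_mem (Finset.mem_univ v)]
  simp only [Finset.card_univ, Fintype.card_fin]
  have : 0 < n := v.pos
  omega

lemma sum_erase_eq_netDeg (B : Bigraph n) (v : Fin n) :
    ∑ u ∈ Finset.univ.erase v, B.bd v u = B.netDeg v := by
  rw [Bigraph.netDeg, ← Finset.sum_erase_add _ _ (Finset.mem_univ v), B.loopless, add_zero]

lemma model_unique (hn : 3 ≤ n) (s : Fin n → Bool) (o : Option (Pair n)) (B : Bigraph n)
    (h : B.netDeg = (model s o).netDeg) : B = model s o := by
  have hrow_full : ∀ v, missB o v v = false → ∀ u, u ≠ v → B.bd v u = sg s v := by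
    intro v hv u hu
    have hsum : ∑ u ∈ Finset.univ.erase v, B.bd v u =
        ((Finset.univ.erase v).card : ℤ) * sg s v := by
      rw [sum_erase_eq_netDeg, h, netDeg_model_row, hv, erase_card_int]
      norm_num
    exact row_forced (sg s v) (sg_mem s v) _ _ (fun i _ => B.bd_mem v i) hsum u
      (Finset.mem_erase.mpr ⟨hu, Finset.mem_univ u⟩)
  rcases o with _ | p
  · refine bigraph_ext (funext fun u => funext fun v => ?_)
    by_cases huv : u = v
    · subst huv; rw [B.loopless, (model s none).loopless]
    · rw [hrow_full u rfl v (fun e => huv e.symm), model_bd_of_ne (s := s) (o := none) huv rfl]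
  · obtain ⟨a, b, hab, hp⟩ := Finset.card_eq_two.mp p.2
    have hmiss : ∀ v : Fin n, missB (some p) v v = decide (v ∈ p.1) := by
      intro v; simp [missB]
    have key : ∀ x y : Fin n, x ≠ y → p.1 = {x, y} →
        B.bd x y = 0 ∧ ∀ i, i ≠ x → i ≠ y → B.bd x i = sg s x := by
      intro x y hxy hpxy
      have hxm : x ∈ p.1 := by rw [hpxy]; simp
      have hsum : ∑ u ∈ Finset.univ.erase x, B.bd x u =
          (((Finset.univ.erase x).card : ℤ) - 1) * sg s x := by
        rw [sum_erase_eq_netDeg, h, netDeg_model_row, hmiss, erase_card_int]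
        rw [decide_eq_true hxm, if_pos rfl]
        ring_nf
      have hne : ∀ i ∈ Finset.univ.erase x, i ≠ y → B.bd x i ≠ 0 := by
        intro i hi hiy
        have hix : i ≠ x := Finset.ne_of_mem_erase hi
        have hinp : i ∉ p.1 := by
          rw [hpxy]; simp only [Finset.mem_insert, Finset.mem_singleton]
          push_neg; exact ⟨hix, hiy⟩
        have : B.bd i x = sg s i :=
          hrow_full i (by rw [hmiss]; simpa using hinp) x (fun e => hix e.symm)
        intro hzero
        have := (B.adj_symm x i).mp hzero
        rw [‹B.bd i x = sg s i›] at this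
        exact sg_ne_zero s i this
      have := row_forced_pair (sg s x) (sg_mem s x) (Finset.univ.erase x) y
        (Finset.mem_erase.mpr ⟨fun e => hxy e.symm, Finset.mem_univ y⟩) (B.bd x)
        (fun i _ => B.bd_mem x i) hne hsum
      exact ⟨this.1, fun i hix hiy =>
        this.2 i (Finset.mem_erase.mpr ⟨hix, Finset.mem_univ i⟩) hiy⟩
    have keyA := key a b hab hp
    have keyB := key b a hab.symm (by rw [hp]; exact Finset.pair_comm a b)
    refine bigraph_ext (funext fun u => funext fun v => ?_)
    by_cases huv : u = v
    · subst huv; rw [B.loopless, (model s (some p)).loopless]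
    · by_cases hu : u ∈ p.1
      · have hu' : u = a ∨ u = b := by
          rw [hp] at hu; simpa using hu
        by_cases hv : v ∈ p.1
        · -- {u,v} = {a,b}
          have hv' : v = a ∨ v = b := by
            rw [hp] at hv; simpa using hv
          have hmod : (model s (some p)).bd u v = 0 := by
            simp [model, huv, missB, hu, hv]
          rw [hmod]
          rcases hu' with rfl | rfl <;> rcases hv' with rfl | rfl
          · exact absurd rfl huv
          · exact keyA.1
          · exact keyB.1
          · exact absurd rfl huv
        · have hmod : (model s (some p)).bd u v = sg s u :=
            model_bd_of_ne huv (by simp [missB, hv])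
          rw [hmod]
          have hva : v ≠ a := fun e => hv (e ▸ (by rw [hp]; simp : a ∈ p.1))
          have hvb : v ≠ b := fun e => hv (e ▸ (by rw [hp]; simp : b ∈ p.1))
          rcases hu' with rfl | rfl
          · exact keyA.2 v hva hvb
          · exact keyB.2 v hvb hva
      · have hmod : (model s (some p)).bd u v = sg s u :=
          model_bd_of_ne huv (by simp [missB, hu])
        rw [hmod]
        exact hrow_full u (by rw [hmiss]; simpa using hu) v (fun e => huv e.symm)

/-! ### Injectivity of the model parametrization on net-degree sequences -/

lemma model_injective (hn : 3 ≤ n) :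
    Function.Injective
      (fun i : (Fin n → Bool) × Option (Pair n) => (model i.1 i.2).netDeg) := by
  have hn' : (3 : ℤ) ≤ (n : ℤ) := by exact_mod_cast hn
  rintro ⟨s, o⟩ ⟨s', o'⟩ h
  simp only at h
  have hv : ∀ v, ((n : ℤ) - if missB o v v then 2 else 1) * sg s v =
      ((n : ℤ) - if missB o' v v then 2 else 1) * sg s' v := by
    intro v
    rw [← netDeg_model_row, ← netDeg_model_row, h]
  have hs : s = s' := by
    funext v
    have := hv v
    cases hsv : s v <;> cases hsv' : s' v <;>
      first
      | rfl
      | (exfalso; simp only [sg, hsv, hsv', if_true, if_false,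
          Bool.false_eq_true, mul_one, mul_neg_one] at this; split_ifs at this <;> omega)
  subst hs
  have hm : ∀ v, missB o v v = missB o' v v := by
    intro v
    have h1 := hv v
    have h2 := mul_right_cancel₀ (sg_ne_zero s v) h1
    cases hb : missB o v v <;> cases hb' : missB o' v v <;>
      first
      | rfl
      | (exfalso; simp only [hb, hb', Bool.false_eq_true, if_true, if_false] at h2; omega)
  rcases o with _ | p <;> rcases o' with _ | q
  · rfl
  · exfalso
    have hq : 0 < q.1.card := by rw [q.2]; norm_num
    obtain ⟨x, hx⟩ := Finset.card_pos.mp hq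
    have := hm x
    simp [missB, hx] at this
  · exfalso
    have hq : 0 < p.1.card := by rw [p.2]; norm_num
    obtain ⟨x, hx⟩ := Finset.card_pos.mp hq
    have := hm x
    simp [missB, hx] at this
  · have hpq : p.1 = q.1 := by
      ext x
      have := hm x
      simp only [missB, Bool.and_self, decide_eq_decide] at this
      exact this
    exact congrArg (fun o => (s, o)) (congrArg some (Subtype.ext hpq))

/-! ### Move 1: a row containing both `+1` and `-1` can be modified -/

lemma no_mixed_row (B : Bigraph n)
    (huniq : ∀ C : Bigraph n, C.netDeg = B.netDeg → C = B)
    {v u w : Fin n} (hu : B.bd v u = 1) (hw : B.bd v w = -1) : False := by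
  have huw : u ≠ w := by intro e; rw [e, hw] at hu; norm_num at hu
  have hvu : u ≠ v := by intro e; rw [e, B.loopless] at hu; norm_num at hu
  have hvw : w ≠ v := by intro e; rw [e, B.loopless] at hw; norm_num at hw
  set f : Fin n → Fin n → ℤ := fun x y =>
    if x = v ∧ y = u then -1 else if x = v ∧ y = w then 1 else B.bd x y with hf
  have hsupp : ∀ x y, (f x y = 0 ↔ B.bd x y = 0) := by
    intro x y
    rw [hf]; dsimp only
    split_ifs with h1 h2
    · rw [h1.1, h1.2, hu]; norm_num
    · rw [h2.1, h2.2, hw]; norm_num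
    · rfl
  set C : Bigraph n := {
    bd := f
    bd_mem := by
      intro x y; rw [hf]; dsimp only
      split_ifs
      · left; rfl
      · right; right; rfl
      · exact B.bd_mem x y
    loopless := by
      intro x; rw [hf]; dsimp only
      split_ifs with h1 h2
      · exact absurd (h1.2.symm.trans h1.1) hvu
      · exact absurd (h2.2.symm.trans h2.1) hvw
      · exact B.loopless x
    adj_symm := by
      intro x y
      exact (hsupp x y).trans ((B.adj_symm x y).trans (hsupp y x).symm) } with hC
  have hdeg : C.netDeg = B.netDeg := by
    funext x
    by_cases hx : x = v
    · subst hx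
      refine sum_eq_of_off (B.bd x) (C.bd x) u w huw ?_ ?_
      · intro i hiu hiw
        show f x i = B.bd x i
        rw [hf]; dsimp only
        rw [if_neg (fun hh => hiu hh.2), if_neg (fun hh => hiw hh.2)]
      · show f x u + f x w = _
        rw [hf]; dsimp only
        rw [if_pos ⟨rfl, rfl⟩, if_neg (fun hh => huw hh.2.symm), if_pos ⟨rfl, rfl⟩, hu, hw]
        ring
    · refine Finset.sum_congr rfl fun i _ => ?_
      show f x i = B.bd x i
      rw [hf]; dsimp only
      rw [if_neg (fun hh => hx hh.1), if_neg (fun hh => hx hh.1)]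
  have := huniq C hdeg
  have : C.bd v u = B.bd v u := by rw [this]
  rw [hu] at this
  have : f v u = 1 := this
  rw [hf] at this; dsimp only at this
  rw [if_pos ⟨rfl, rfl⟩] at this
  norm_num at this

/-! ### Move 2a: three mutually non-adjacent vertices -/

lemma no_empty_triangle (B : Bigraph n)
    (huniq : ∀ C : Bigraph n, C.netDeg = B.netDeg → C = B)
    {a b c : Fin n} (hab : a ≠ b) (hac : a ≠ c) (hbc : b ≠ c)
    (h1 : B.bd a b = 0) (h2 : B.bd a c = 0) (h3 : B.bd b c = 0) : False := by
  have h1' : B.bd b a = 0 := (B.adj_symm a b).mp h1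
  have h2' : B.bd c a = 0 := (B.adj_symm a c).mp h2
  have h3' : B.bd c b = 0 := (B.adj_symm b c).mp h3
  set f : Fin n → Fin n → ℤ := fun x y =>
    if x = a ∧ y = b then 1 else if x = b ∧ y = a then -1
    else if x = b ∧ y = c then 1 else if x = c ∧ y = b then -1
    else if x = c ∧ y = a then 1 else if x = a ∧ y = c then -1
    else B.bd x y with hf
  have hoff : ∀ x y, ¬(x = a ∧ y = b) → ¬(x = b ∧ y = a) → ¬(x = b ∧ y = c) →
      ¬(x = c ∧ y = b) → ¬(x = c ∧ y = a) → ¬(x = a ∧ y = c) → f x y = B.bd x y := by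
    intro x y g1 g2 g3 g4 g5 g6
    rw [hf]; dsimp only
    rw [if_neg g1, if_neg g2, if_neg g3, if_neg g4, if_neg g5, if_neg g6]
  have fab : f a b = 1 := by
    rw [hf]; dsimp only; rw [if_pos ⟨rfl, rfl⟩]
  have fba : f b a = -1 := by
    rw [hf]; dsimp only
    rw [if_neg (fun h => hab h.1.symm), if_pos ⟨rfl, rfl⟩]
  have fbc : f b c = 1 := by
    rw [hf]; dsimp only
    rw [if_neg (fun h => hab h.1.symm), if_neg (fun h => hac h.2.symm),
      if_pos ⟨rfl, rfl⟩]
  have fcb : f c b = -1 := by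
    rw [hf]; dsimp only
    rw [if_neg (fun h => hac h.1.symm), if_neg (fun h => hbc h.1.symm),
      if_neg (fun h => hbc h.1.symm), if_pos ⟨rfl, rfl⟩]
  have fca : f c a = 1 := by
    rw [hf]; dsimp only
    rw [if_neg (fun h => hac h.1.symm), if_neg (fun h => hbc h.1.symm),
      if_neg (fun h => hbc h.1.symm), if_neg (fun h => hab h.2), if_pos ⟨rfl, rfl⟩]
  have fac : f a c = -1 := by
    rw [hf]; dsimp only
    rw [if_neg (fun h => hbc h.2.symm), if_neg (fun h => hab h.1),
      if_neg (fun h => hab h.1), if_neg (fun h => hac h.1), if_neg (fun h => hac h.1),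
      if_pos ⟨rfl, rfl⟩]
  set C : Bigraph n := {
    bd := f
    bd_mem := by
      intro x y; simp only [hf]
      split_ifs <;> first | exact B.bd_mem x y | norm_num
    loopless := by
      intro x; simp only [hf]
      split_ifs with g1 g2 g3 g4 g5 g6
      · exact absurd (g1.1.symm.trans g1.2) hab
      · exact absurd (g2.1.symm.trans g2.2) hab.symm
      · exact absurd (g3.1.symm.trans g3.2) hbc
      · exact absurd (g4.1.symm.trans g4.2) hbc.symm
      · exact absurd (g5.1.symm.trans g5.2) hac.symm
      · exact absurd (g6.1.symm.trans g6.2) hac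
      · exact B.loopless x
    adj_symm := by
      intro x y
      show f x y = 0 ↔ f y x = 0
      by_cases hxy : x = y
      · subst hxy; exact Iff.rfl
      · by_cases hx : (x = a ∨ x = b ∨ x = c) ∧ (y = a ∨ y = b ∨ y = c)
        · obtain ⟨hx1, hy1⟩ := hx
          rcases hx1 with rfl | rfl | rfl <;> rcases hy1 with rfl | rfl | rfl <;>
            first
            | exact absurd rfl hxy
            | (rw [fab, fba]; norm_num)
            | (rw [fba, fab]; norm_num)
            | (rw [fbc, fcb]; norm_num)
            | (rw [fcb, fbc]; norm_num)
            | (rw [fca, fac]; norm_num)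
            | (rw [fac, fca]; norm_num)
        · have e1 : f x y = B.bd x y := by
            refine hoff x y ?_ ?_ ?_ ?_ ?_ ?_ <;>
              exact fun h => hx ⟨by simp [h.1], by simp [h.2]⟩
          have e2 : f y x = B.bd y x := by
            refine hoff y x ?_ ?_ ?_ ?_ ?_ ?_ <;>
              exact fun h => hx ⟨by simp [h.2], by simp [h.1]⟩
          rw [e1, e2]; exact B.adj_symm x y } with hC
  have hdeg : C.netDeg = B.netDeg := by
    funext x
    show ∑ i, f x i = ∑ i, B.bd x i
    by_cases hxa : x = a
    · subst hxa
      refine sum_eq_of_off (B.bd x) (f x) b c hbc ?_ ?_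
      · intro i hib hic
        exact hoff x i (fun h => hib h.2) (fun h => hab h.1)
          (fun h => hab h.1) (fun h => hac h.1) (fun h => hac h.1)
          (fun h => hic h.2)
      · rw [fab, fac, h1, h2]; ring
    · by_cases hxb : x = b
      · subst hxb
        refine sum_eq_of_off (B.bd x) (f x) a c hac ?_ ?_
        · intro i hia hic
          exact hoff x i (fun h => hab h.1.symm) (fun h => hia h.2) (fun h => hic h.2)
            (fun h => hbc h.1) (fun h => hbc h.1) (fun h => hab h.1.symm)
        · rw [fba, fbc, h1', h3]; ring
      · by_cases hxc : x = c
        · subst hxc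
          refine sum_eq_of_off (B.bd x) (f x) a b hab ?_ ?_
          · intro i hia hib
            exact hoff x i (fun h => hac h.1.symm) (fun h => hbc h.1.symm)
              (fun h => hbc h.1.symm) (fun h => hib h.2) (fun h => hia h.2)
              (fun h => hac h.1.symm)
          · rw [fca, fcb, h2', h3']; ring
        · refine Finset.sum_congr rfl fun i _ => ?_
          exact hoff x i (fun h => hxa h.1) (fun h => hxb h.1) (fun h => hxb h.1)
            (fun h => hxc h.1) (fun h => hxc h.1) (fun h => hxa h.1)
  have hCB := huniq C hdeg
  have hval : C.bd a b = B.bd a b := by rw [hCB]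
  have hval' : f a b = B.bd a b := hval
  rw [fab, h1] at hval'
  norm_num at hval'

/-! ### Move 2b: vertex with two non-neighbours joined by an edge -/

lemma no_cherry (B : Bigraph n)
    (huniq : ∀ C : Bigraph n, C.netDeg = B.netDeg → C = B)
    {a b c : Fin n} (hab : a ≠ b) (hac : a ≠ c) (hbc : b ≠ c)
    (h1 : B.bd a b = 0) (h2 : B.bd a c = 0) (h3 : B.bd b c ≠ 0) : False := by
  have h1' : B.bd b a = 0 := (B.adj_symm a b).mp h1
  have h2' : B.bd c a = 0 := (B.adj_symm a c).mp h2
  have hq : B.bd c b ≠ 0 := fun hz => h3 ((B.adj_symm c b).mp hz)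
  set f : Fin n → Fin n → ℤ := fun x y =>
    if x = a ∧ y = b then 1
    else if x = a ∧ y = c then -1
    else if x = b ∧ y = a then B.bd b c
    else if x = c ∧ y = a then B.bd c b
    else if x = b ∧ y = c then 0
    else if x = c ∧ y = b then 0
    else B.bd x y with hf
  have hoff : ∀ x y, ¬(x = a ∧ y = b) → ¬(x = a ∧ y = c) → ¬(x = b ∧ y = a) →
      ¬(x = c ∧ y = a) → ¬(x = b ∧ y = c) → ¬(x = c ∧ y = b) → f x y = B.bd x y := by
    intro x y g1 g2 g3 g4 g5 g6
    rw [hf]; dsimp only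
    rw [if_neg g1, if_neg g2, if_neg g3, if_neg g4, if_neg g5, if_neg g6]
  have fab : f a b = 1 := by
    rw [hf]; dsimp only; rw [if_pos ⟨rfl, rfl⟩]
  have fac : f a c = -1 := by
    rw [hf]; dsimp only
    rw [if_neg (fun h => hbc h.2.symm), if_pos ⟨rfl, rfl⟩]
  have fba : f b a = B.bd b c := by
    rw [hf]; dsimp only
    rw [if_neg (fun h => hab h.1.symm), if_neg (fun h => hab h.1.symm),
      if_pos ⟨rfl, rfl⟩]
  have fca : f c a = B.bd c b := by
    rw [hf]; dsimp only
    rw [if_neg (fun h => hac h.1.symm), if_neg (fun h => hac h.1.symm),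
      if_neg (fun h => hbc h.1.symm), if_pos ⟨rfl, rfl⟩]
  have fbc : f b c = 0 := by
    rw [hf]; dsimp only
    rw [if_neg (fun h => hab h.1.symm), if_neg (fun h => hab h.1.symm),
      if_neg (fun h => hac h.2.symm), if_neg (fun h => hbc h.1),
      if_pos ⟨rfl, rfl⟩]
  have fcb : f c b = 0 := by
    rw [hf]; dsimp only
    rw [if_neg (fun h => hac h.1.symm), if_neg (fun h => hac h.1.symm),
      if_neg (fun h => hbc h.1.symm), if_neg (fun h => hab h.2.symm),
      if_neg (fun h => hbc h.1.symm), if_pos ⟨rfl, rfl⟩]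
  set C : Bigraph n := {
    bd := f
    bd_mem := by
      intro x y; rw [hf]; dsimp only
      split_ifs <;>
        first
        | exact B.bd_mem x y
        | exact B.bd_mem b c
        | exact B.bd_mem c b
        | norm_num
    loopless := by
      intro x; rw [hf]; dsimp only
      split_ifs with g1 g2 g3 g4 g5 g6
      · exact absurd (g1.1.symm.trans g1.2) hab
      · exact absurd (g2.1.symm.trans g2.2) hac
      · exact absurd (g3.1.symm.trans g3.2) hab.symm
      · exact absurd (g4.1.symm.trans g4.2) hac.symm
      · exact absurd (g5.1.symm.trans g5.2) hbc
      · exact absurd (g6.1.symm.trans g6.2) hbc.symm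
      · exact B.loopless x
    adj_symm := by
      intro x y
      show f x y = 0 ↔ f y x = 0
      by_cases hxy : x = y
      · subst hxy; exact Iff.rfl
      · by_cases hx : (x = a ∨ x = b ∨ x = c) ∧ (y = a ∨ y = b ∨ y = c)
        · obtain ⟨hx1, hy1⟩ := hx
          rcases hx1 with rfl | rfl | rfl <;> rcases hy1 with rfl | rfl | rfl <;>
            first
            | exact absurd rfl hxy
            | (rw [fab, fba]; simp [h3])
            | (rw [fba, fab]; simp [h3])
            | (rw [fac, fca]; simp [hq])
            | (rw [fca, fac]; simp [hq])
            | rw [fbc, fcb]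
            | rw [fcb, fbc]
        · have e1 : f x y = B.bd x y := by
            refine hoff x y ?_ ?_ ?_ ?_ ?_ ?_ <;>
              exact fun h => hx ⟨by simp [h.1], by simp [h.2]⟩
          have e2 : f y x = B.bd y x := by
            refine hoff y x ?_ ?_ ?_ ?_ ?_ ?_ <;>
              exact fun h => hx ⟨by simp [h.2], by simp [h.1]⟩
          rw [e1, e2]; exact B.adj_symm x y } with hC
  have hdeg : C.netDeg = B.netDeg := by
    funext x
    show ∑ i, f x i = ∑ i, B.bd x i
    by_cases hxa : x = a
    · subst hxa
      refine sum_eq_of_off (B.bd x) (f x) b c hbc ?_ ?_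
      · intro i hib hic
        exact hoff x i (fun h => hib h.2) (fun h => hic h.2) (fun h => hab h.1)
          (fun h => hac h.1) (fun h => hab h.1) (fun h => hac h.1)
      · rw [fab, fac, h1, h2]; ring
    · by_cases hxb : x = b
      · subst hxb
        refine sum_eq_of_off (B.bd x) (f x) a c hac ?_ ?_
        · intro i hia hic
          exact hoff x i (fun h => hab h.1.symm) (fun h => hab h.1.symm)
            (fun h => hia h.2) (fun h => hbc h.1) (fun h => hic h.2)
            (fun h => hbc h.1)
        · rw [fba, fbc, h1']; ring
      · by_cases hxc : x = c
        · subst hxc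
          refine sum_eq_of_off (B.bd x) (f x) a b hab ?_ ?_
          · intro i hia hib
            exact hoff x i (fun h => hac h.1.symm) (fun h => hac h.1.symm)
              (fun h => hbc h.1.symm) (fun h => hia h.2) (fun h => hbc h.1.symm)
              (fun h => hib h.2)
          · rw [fca, fcb, h2']; ring
        · refine Finset.sum_congr rfl fun i _ => ?_
          exact hoff x i (fun h => hxa h.1) (fun h => hxa h.1) (fun h => hxb h.1)
            (fun h => hxc h.1) (fun h => hxb h.1) (fun h => hxc h.1)
  have hCB := huniq C hdeg
  have hval : C.bd a b = B.bd a b := by rw [hCB]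
  have hval' : f a b = B.bd a b := hval
  rw [fab, h1] at hval'
  norm_num at hval'

/-- No vertex has two distinct non-neighbours in a uniquely-realizing bigraph. -/
lemma no_two_nonnbrs (B : Bigraph n)
    (huniq : ∀ C : Bigraph n, C.netDeg = B.netDeg → C = B)
    {a b c : Fin n} (hab : a ≠ b) (hac : a ≠ c) (hbc : b ≠ c)
    (h1 : B.bd a b = 0) (h2 : B.bd a c = 0) : False := by
  by_cases h3 : B.bd b c = 0
  · exact no_empty_triangle B huniq hab hac hbc h1 h2 h3
  · exact no_cherry B huniq hab hac hbc h1 h2 h3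

/-! ### Move 3: two disjoint non-edges with cross edges present -/

set_option maxHeartbeats 2000000 in
lemma no_two_missing_edges (B : Bigraph n)
    (huniq : ∀ C : Bigraph n, C.netDeg = B.netDeg → C = B)
    {a b c d : Fin n} (hab : a ≠ b) (hac : a ≠ c) (had : a ≠ d) (hbc : b ≠ c)
    (hbd : b ≠ d) (hcd : c ≠ d)
    (h1 : B.bd a b = 0) (h2 : B.bd c d = 0) (h3 : B.bd a c ≠ 0) (h4 : B.bd b d ≠ 0) :
    False := by
  have h1' : B.bd b a = 0 := (B.adj_symm a b).mp h1
  have h2' : B.bd d c = 0 := (B.adj_symm c d).mp h2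
  have h3' : B.bd c a ≠ 0 := fun hz => h3 ((B.adj_symm c a).mp hz)
  have h4' : B.bd d b ≠ 0 := fun hz => h4 ((B.adj_symm d b).mp hz)
  set f : Fin n → Fin n → ℤ := fun x y =>
    if x = a ∧ y = c then 0
    else if x = c ∧ y = a then 0
    else if x = b ∧ y = d then 0
    else if x = d ∧ y = b then 0
    else if x = a ∧ y = b then B.bd a c
    else if x = b ∧ y = a then B.bd b d
    else if x = c ∧ y = d then B.bd c a
    else if x = d ∧ y = c then B.bd d b
    else B.bd x y with hf
  have hoff : ∀ x y, ¬(x = a ∧ y = c) → ¬(x = c ∧ y = a) → ¬(x = b ∧ y = d) →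
      ¬(x = d ∧ y = b) → ¬(x = a ∧ y = b) → ¬(x = b ∧ y = a) → ¬(x = c ∧ y = d) →
      ¬(x = d ∧ y = c) → f x y = B.bd x y := by
    intro x y g1 g2 g3 g4 g5 g6 g7 g8
    rw [hf]; dsimp only
    rw [if_neg g1, if_neg g2, if_neg g3, if_neg g4, if_neg g5, if_neg g6, if_neg g7,
      if_neg g8]
  have fac : f a c = 0 := by
    rw [hf]; dsimp only; rw [if_pos ⟨rfl, rfl⟩]
  have fca : f c a = 0 := by
    rw [hf]; dsimp only
    rw [if_neg (fun h => hac h.1.symm), if_pos ⟨rfl, rfl⟩]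
  have fbd : f b d = 0 := by
    rw [hf]; dsimp only
    rw [if_neg (fun h => hab h.1.symm), if_neg (fun h => hbc h.1), if_pos ⟨rfl, rfl⟩]
  have fdb : f d b = 0 := by
    rw [hf]; dsimp only
    rw [if_neg (fun h => had h.1.symm), if_neg (fun h => hcd h.1.symm),
      if_neg (fun h => hbd h.1.symm), if_pos ⟨rfl, rfl⟩]
  have fab : f a b = B.bd a c := by
    rw [hf]; dsimp only
    rw [if_neg (fun h => hbc h.2), if_neg (fun h => hac h.1), if_neg (fun h => hab h.1),
      if_neg (fun h => had h.1), if_pos ⟨rfl, rfl⟩]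
  have fba : f b a = B.bd b d := by
    rw [hf]; dsimp only
    rw [if_neg (fun h => hab h.1.symm), if_neg (fun h => hbc h.1),
      if_neg (fun h => had h.2), if_neg (fun h => hbd h.1),
      if_neg (fun h => hab h.1.symm), if_pos ⟨rfl, rfl⟩]
  have fcd : f c d = B.bd c a := by
    rw [hf]; dsimp only
    rw [if_neg (fun h => hac h.1.symm), if_neg (fun h => had h.2.symm),
      if_neg (fun h => hbc h.1.symm), if_neg (fun h => hcd h.1),
      if_neg (fun h => hac h.1.symm), if_neg (fun h => hbc h.1.symm),
      if_pos ⟨rfl, rfl⟩]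
  have fdc : f d c = B.bd d b := by
    rw [hf]; dsimp only
    rw [if_neg (fun h => had h.1.symm), if_neg (fun h => hcd h.1.symm),
      if_neg (fun h => hbd h.1.symm), if_neg (fun h => hbc h.2.symm),
      if_neg (fun h => had h.1.symm), if_neg (fun h => hbd h.1.symm),
      if_neg (fun h => hcd h.1.symm), if_pos ⟨rfl, rfl⟩]
  set C : Bigraph n := {
    bd := f
    bd_mem := by
      intro x y; rw [hf]; dsimp only
      split_ifs <;>
        first
        | exact B.bd_mem x y
        | exact B.bd_mem a c
        | exact B.bd_mem b d
        | exact B.bd_mem c a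
        | exact B.bd_mem d b
        | norm_num
    loopless := by
      intro x; rw [hf]; dsimp only
      split_ifs with g1 g2 g3 g4 g5 g6 g7 g8
      · exact absurd (g1.1.symm.trans g1.2) hac
      · exact absurd (g2.1.symm.trans g2.2) hac.symm
      · exact absurd (g3.1.symm.trans g3.2) hbd
      · exact absurd (g4.1.symm.trans g4.2) hbd.symm
      · exact absurd (g5.1.symm.trans g5.2) hab
      · exact absurd (g6.1.symm.trans g6.2) hab.symm
      · exact absurd (g7.1.symm.trans g7.2) hcd
      · exact absurd (g8.1.symm.trans g8.2) hcd.symm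
      · exact B.loopless x
    adj_symm := by
      intro x y
      show f x y = 0 ↔ f y x = 0
      by_cases hch : (x = a ∧ y = c) ∨ (x = c ∧ y = a) ∨ (x = b ∧ y = d) ∨
          (x = d ∧ y = b) ∨ (x = a ∧ y = b) ∨ (x = b ∧ y = a) ∨ (x = c ∧ y = d) ∨
          (x = d ∧ y = c)
      · rcases hch with ⟨rfl, rfl⟩ | ⟨rfl, rfl⟩ | ⟨rfl, rfl⟩ | ⟨rfl, rfl⟩ |
          ⟨rfl, rfl⟩ | ⟨rfl, rfl⟩ | ⟨rfl, rfl⟩ | ⟨rfl, rfl⟩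
        · rw [fac, fca]
        · rw [fca, fac]
        · rw [fbd, fdb]
        · rw [fdb, fbd]
        · rw [fab, fba]; simp [h3, h4]
        · rw [fba, fab]; simp [h3, h4]
        · rw [fcd, fdc]; simp [h3', h4']
        · rw [fdc, fcd]; simp [h3', h4']
      · have e1 : f x y = B.bd x y :=
          hoff x y (fun h => hch (Or.inl h)) (fun h => hch (Or.inr (Or.inl h)))
            (fun h => hch (Or.inr (Or.inr (Or.inl h))))
            (fun h => hch (Or.inr (Or.inr (Or.inr (Or.inl h)))))
            (fun h => hch (Or.inr (Or.inr (Or.inr (Or.inr (Or.inl h))))))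
            (fun h => hch (Or.inr (Or.inr (Or.inr (Or.inr (Or.inr (Or.inl h)))))))
            (fun h => hch (Or.inr (Or.inr (Or.inr (Or.inr (Or.inr (Or.inr (Or.inl h))))))))
            (fun h => hch (Or.inr (Or.inr (Or.inr (Or.inr (Or.inr (Or.inr (Or.inr h))))))))
        have e2 : f y x = B.bd y x :=
          hoff y x (fun h => hch (Or.inr (Or.inl ⟨h.2, h.1⟩)))
            (fun h => hch (Or.inl ⟨h.2, h.1⟩))
            (fun h => hch (Or.inr (Or.inr (Or.inr (Or.inl ⟨h.2, h.1⟩)))))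
            (fun h => hch (Or.inr (Or.inr (Or.inl ⟨h.2, h.1⟩))))
            (fun h => hch (Or.inr (Or.inr (Or.inr (Or.inr (Or.inr (Or.inl ⟨h.2, h.1⟩)))))))
            (fun h => hch (Or.inr (Or.inr (Or.inr (Or.inr (Or.inl ⟨h.2, h.1⟩))))))
            (fun h => hch (Or.inr (Or.inr (Or.inr (Or.inr (Or.inr (Or.inr (Or.inr ⟨h.2, h.1⟩))))))))
            (fun h => hch (Or.inr (Or.inr (Or.inr (Or.inr (Or.inr (Or.inr (Or.inl ⟨h.2, h.1⟩))))))))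
        rw [e1, e2]; exact B.adj_symm x y } with hC
  have hdeg : C.netDeg = B.netDeg := by
    funext x
    show ∑ i, f x i = ∑ i, B.bd x i
    by_cases hxa : x = a
    · subst hxa
      refine sum_eq_of_off (B.bd x) (f x) c b hbc.symm ?_ ?_
      · intro i hic hib
        exact hoff x i (fun h => hic h.2) (fun h => hac h.1) (fun h => hab h.1)
          (fun h => had h.1) (fun h => hib h.2) (fun h => hab h.1) (fun h => hac h.1)
          (fun h => had h.1)
      · rw [fac, fab, h1]; ring
    · by_cases hxb : x = b
      · subst hxb
        refine sum_eq_of_off (B.bd x) (f x) d a had.symm ?_ ?_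
        · intro i hid hia
          exact hoff x i (fun h => hab h.1.symm) (fun h => hbc h.1) (fun h => hid h.2)
            (fun h => hbd h.1) (fun h => hab h.1.symm) (fun h => hia h.2)
            (fun h => hbc h.1) (fun h => hbd h.1)
        · rw [fbd, fba, h1']; ring
      · by_cases hxc : x = c
        · subst hxc
          refine sum_eq_of_off (B.bd x) (f x) a d had ?_ ?_
          · intro i hia hid
            exact hoff x i (fun h => hac h.1.symm) (fun h => hia h.2)
              (fun h => hbc h.1.symm) (fun h => hcd h.1) (fun h => hac h.1.symm)
              (fun h => hbc h.1.symm) (fun h => hid h.2) (fun h => hcd h.1)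
          · rw [fca, fcd, h2]; ring
        · by_cases hxd : x = d
          · subst hxd
            refine sum_eq_of_off (B.bd x) (f x) b c hbc ?_ ?_
            · intro i hib hic
              exact hoff x i (fun h => had h.1.symm) (fun h => hcd h.1.symm)
                (fun h => hbd h.1.symm) (fun h => hib h.2) (fun h => had h.1.symm)
                (fun h => hbd h.1.symm) (fun h => hcd h.1.symm) (fun h => hic h.2)
            · rw [fdb, fdc, h2']; ring
          · refine Finset.sum_congr rfl fun i _ => ?_
            exact hoff x i (fun h => hxa h.1) (fun h => hxc h.1) (fun h => hxb h.1)
              (fun h => hxd h.1) (fun h => hxa h.1) (fun h => hxb h.1)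
              (fun h => hxc h.1) (fun h => hxd h.1)
  have hCB := huniq C hdeg
  have hval : C.bd a c = B.bd a c := by rw [hCB]
  have hval' : f a c = B.bd a c := hval
  rw [fac] at hval'
  exact h3 hval'.symm

/-! ### Classification of uniquely realizing bigraphs -/

lemma classify (hn : 3 ≤ n) (B : Bigraph n)
    (huniq : ∀ C : Bigraph n, C.netDeg = B.netDeg → C = B) :
    ∃ (s : Fin n → Bool) (o : Option (Pair n)), B = model s o := by
  classical
  -- the sign function
  set s : Fin n → Bool := fun v => decide (∃ u, B.bd v u = 1) with hs
  have hsg : ∀ v u, B.bd v u ≠ 0 → B.bd v u = sg s v := by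
    intro v u hnz
    rcases B.bd_mem v u with h | h | h
    · have hnex : ¬ ∃ w, B.bd v w = 1 := by
        rintro ⟨w, hw⟩
        exact no_mixed_row B huniq hw h
      have hsv : s v = false := by rw [hs]; simpa using hnex
      rw [h, sg, hsv]; norm_num
    · exact absurd h hnz
    · have hsv : s v = true := by rw [hs]; simp only [decide_eq_true_eq]; exact ⟨u, h⟩
      rw [h, sg, hsv]; norm_num
  by_cases hcomp : ∀ u v : Fin n, u ≠ v → B.bd u v ≠ 0
  · refine ⟨s, none, bigraph_ext (funext fun u => funext fun v => ?_)⟩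
    by_cases huv : u = v
    · subst huv; rw [B.loopless, (model s none).loopless]
    · rw [model_bd_of_ne (s := s) (o := none) huv rfl]
      exact hsg u v (hcomp u v huv)
  · push_neg at hcomp
    obtain ⟨a, b, hab, h0⟩ := hcomp
    have h0' : B.bd b a = 0 := (B.adj_symm a b).mp h0
    have hmiss : ∀ u v : Fin n, u ≠ v →
        (B.bd u v = 0 ↔ (u = a ∨ u = b) ∧ (v = a ∨ v = b)) := by
      intro u v huv
      constructor
      · intro hz
        by_cases hua : u = a
        · subst hua
          by_cases hvb : v = b
          · exact ⟨Or.inl rfl, Or.inr hvb⟩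
          · exact absurd (no_two_nonnbrs B huniq hab huv (fun e => hvb e.symm) h0 hz)
              not_false
        · by_cases hub : u = b
          · subst hub
            by_cases hva : v = a
            · exact ⟨Or.inr rfl, Or.inl hva⟩
            · exact absurd (no_two_nonnbrs B huniq hab.symm huv
                (fun e => hva e.symm) h0' hz) not_false
          · exfalso
            by_cases hva : v = a
            · subst hva
              exact no_two_nonnbrs B huniq hab (fun e => hua e.symm)
                (fun e => hub e.symm) h0 ((B.adj_symm u v).mp hz)
            · by_cases hvb : v = b
              · subst hvb
                exact no_two_nonnbrs B huniq hab.symm (fun e => hub e.symm)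
                  (fun e => hua e.symm) h0' ((B.adj_symm u v).mp hz)
              · have h3 : B.bd a u ≠ 0 := by
                  intro hz'
                  exact no_two_nonnbrs B huniq hab (fun e => hua e.symm)
                    (fun e => hub e.symm) h0 hz'
                have h4 : B.bd b v ≠ 0 := by
                  intro hz'
                  exact no_two_nonnbrs B huniq hab.symm (fun e => hvb e.symm)
                    (fun e => hva e.symm) h0' hz'
                exact no_two_missing_edges B huniq hab (fun e => hua e.symm)
                  (fun e => hva e.symm) (fun e => hub e.symm) (fun e => hvb e.symm)
                  huv h0 hz h3 h4
      · rintro ⟨hu, hv⟩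
        rcases hu with rfl | rfl <;> rcases hv with rfl | rfl
        · exact absurd rfl huv
        · exact h0
        · exact h0'
        · exact absurd rfl huv
    refine ⟨s, some ⟨{a, b}, Finset.card_pair hab⟩,
      bigraph_ext (funext fun u => funext fun v => ?_)⟩
    by_cases huv : u = v
    · subst huv; rw [B.loopless, (model _ _).loopless]
    · by_cases hm : (u = a ∨ u = b) ∧ (v = a ∨ v = b)
      · have hmB : missB (some ⟨({a, b} : Finset (Fin n)), Finset.card_pair hab⟩) u v
            = true := by
          simp only [missB, Bool.and_eq_true, decide_eq_true_eq, Finset.mem_insert,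
            Finset.mem_singleton]
          exact hm
        have : (model s (some ⟨{a, b}, Finset.card_pair hab⟩)).bd u v = 0 := by
          simp [model, huv, hmB]
        rw [this]
        exact (hmiss u v huv).mpr hm
      · have hmB : missB (some ⟨({a, b} : Finset (Fin n)), Finset.card_pair hab⟩) u v
            = false := by
          refine Bool.eq_false_iff.mpr ?_
          intro hcon
          simp only [missB, Bool.and_eq_true, decide_eq_true_eq, Finset.mem_insert,
            Finset.mem_singleton] at hcon
          exact hm hcon
        rw [model_bd_of_ne huv hmB]
        refine hsg u v ?_
        intro hz
        exact hm ((hmiss u v huv).mp hz)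

end BigraphUR

open BigraphUR in

/-- For `n ≥ 3`, the number of uniquely realizable net-degree sequences of bidirected
graphs on `n` labelled vertices is `2^n C(n,2) + 2^n`. -/
theorem card_uniquely_realizable_bigraph_sequences (n : ℕ) (hn : 3 ≤ n) :
    {d : Fin n → ℤ | ∃! B : Bigraph n, B.netDeg = d}.ncard =
      2 ^ n * n.choose 2 + 2 ^ n := by
  classical
  have hset : {d : Fin n → ℤ | ∃! B : Bigraph n, B.netDeg = d} =
      Set.range (fun i : (Fin n → Bool) × Option (Pair n) => (model i.1 i.2).netDeg) := by
    ext d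
    constructor
    · rintro ⟨B, hB, huniq⟩
      have huniq' : ∀ C : Bigraph n, C.netDeg = B.netDeg → C = B := by
        intro C hC
        exact huniq C (show C.netDeg = d by rw [hC, hB])
      obtain ⟨s, o, hmod⟩ := classify hn B huniq'
      exact ⟨(s, o), show (model s o).netDeg = d by rw [← hmod]; exact hB⟩
    · rintro ⟨⟨s, o⟩, rfl⟩
      exact ⟨model s o, rfl, fun C hC => model_unique hn s o C hC⟩
  rw [hset, ← Set.image_univ, Set.ncard_image_of_injective _ (model_injective hn),
    Set.ncard_univ, Nat.card_eq_fintype_card, Fintype.card_prod, Fintype.card_option]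
  rw [Fintype.card_finset_len, Fintype.card_fin]
  rw [Fintype.card_fun, Fintype.card_bool, Fintype.card_fin]
  ring
end
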